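/- arXiv:1803.07388 — 9 statements merged into one kernel-verified Lean document; each statement's English description precedes it below -/
import Mathlib

section
/- Every element of the triangle state space Ω_3 can be written uniquely as p ω_0³ + q ω_1³ + r ω_2³ with p,q,r ≥ 0, p+q+r = 1, and the function S : Ω_3 → ℝ defined by S(p ω_0³ + q ω_1³ + r ω_2³) = −p log p − q log q − r log r is an entropy of mixing on Ω_3. -/
open Real

noncomputable section

/-- The ambient vector space ℝ³. -/
abbrev V3 : Type := Fin 3 → ℝ

/-- The linear functional on ℝ³ given by the Euclidean inner product with `v`. -/
def dotL (v : V3) : V3 →ₗ[ℝ] ℝ :=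
  ∑ i, v i • (LinearMap.proj i : V3 →ₗ[ℝ] ℝ)

/-- The unit effect `u (x, y, z) = z`. -/
def uEff : V3 →ₗ[ℝ] ℝ := LinearMap.proj 2

/-- `e` is an effect on `Ω`: a linear functional with values in `[0,1]` on `Ω`. -/
def IsEffect (Ω : Set V3) (e : V3 →ₗ[ℝ] ℝ) : Prop :=
  ∀ ω ∈ Ω, 0 ≤ e ω ∧ e ω ≤ 1

/-- The states `ω 0, …, ω (l-1)` are perfectly distinguishable in `Ω`:
there are effects summing to the unit effect with `e i (ω j) = δ_{ij}`. -/
def PerfDist (Ω : Set V3) {l : ℕ} (ω : Fin l → V3) : Prop :=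
  ∃ e : Fin l → (V3 →ₗ[ℝ] ℝ),
    (∀ i, IsEffect Ω (e i)) ∧ (∑ i, e i) = uEff ∧
    ∀ i j, e i (ω j) = if i = j then 1 else 0

/-- `S` is an entropy of mixing on `Ω`: it vanishes on extreme points, and for every
finite family of perfectly distinguishable states and every probability weight,
`S (Σ pᵢ ωᵢ) = Σ pᵢ S(ωᵢ) − Σ pᵢ log pᵢ` (note `Real.log 0 = 0`, so `0 log 0 = 0`). -/
def IsEntropyOfMixing (Ω : Set V3) (S : V3 → ℝ) : Prop :=
  (∀ ω ∈ Set.extremePoints ℝ Ω, S ω = 0) ∧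
  ∀ (l : ℕ) (ω : Fin l → V3), (∀ j, ω j ∈ Ω) → PerfDist Ω ω →
    ∀ p : Fin l → ℝ, (∀ i, 0 ≤ p i) → (∑ i, p i) = 1 →
      S (∑ i, p i • ω i) = (∑ i, p i * S (ω i)) - ∑ i, p i * Real.log (p i)

/-- `r_n = √(1 / cos (π/n))`. -/
def rn (n : ℕ) : ℝ := Real.sqrt (1 / Real.cos (π / n))

/-- The pure states `ω_i^n` of the `n`-gon theory (indices mod `n` via periodicity). -/
def pur (n : ℕ) (i : ℤ) : V3 :=
  ![rn n * Real.cos (2 * π * i / n), rn n * Real.sin (2 * π * i / n), 1]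

/-- The `n`-gon state space `Ω_n`: the convex hull of the `n` pure states. -/
def Omega (n : ℕ) : Set V3 :=
  convexHull ℝ {x : V3 | ∃ i : Fin n, x = pur n (i : ℤ)}

/-- The extreme effect `e_i^n` for even `n`. -/
def effE (n : ℕ) (i : ℤ) : V3 →ₗ[ℝ] ℝ :=
  dotL ((1/2 : ℝ) •
    ![rn n * Real.cos ((2*i-1) * π / n), rn n * Real.sin ((2*i-1) * π / n), 1])

/-- The extreme effect `e_i^n` for odd `n`. -/
def effO (n : ℕ) (i : ℤ) : V3 →ₗ[ℝ] ℝ :=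
  dotL ((1/(1 + rn n ^ 2)) •
    ![rn n * Real.cos (2*i*π/n), rn n * Real.sin (2*i*π/n), 1])

/-- The disk state space `Ω_∞ = {(x,y,1) : x² + y² ≤ 1}`. -/
def OmegaInf : Set V3 := {x : V3 | x 2 = 1 ∧ (x 0)^2 + (x 1)^2 ≤ 1}

/-- The pure states `ω_θ^∞` of the disk theory. -/
def purInf (θ : ℝ) : V3 := ![Real.cos θ, Real.sin θ, 1]

/-- The extreme effects `e_θ^∞` of the disk theory. -/
def effInf (θ : ℝ) : V3 →ₗ[ℝ] ℝ :=
  dotL ((1/2 : ℝ) • ![Real.cos θ, Real.sin θ, 1])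

/-- The binary (1-bit Shannon) entropy `H(p) = −p log p − (1−p) log (1−p)`. -/
def H (p : ℝ) : ℝ := -(p * Real.log p) - (1 - p) * Real.log (1 - p)
namespace T1

def vv : Fin 3 → V3 :=
  ![![Real.sqrt 2, 0, 1],
    ![-(Real.sqrt 2) / 2, Real.sqrt 2 * Real.sqrt 3 / 2, 1],
    ![-(Real.sqrt 2) / 2, -(Real.sqrt 2 * Real.sqrt 3) / 2, 1]]

def fv : Fin 3 → V3 :=
  ![![Real.sqrt 2 / 3, 0, 1/3],
    ![-(Real.sqrt 2) / 6, Real.sqrt 2 * Real.sqrt 3 / 6, 1/3],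
    ![-(Real.sqrt 2) / 6, -(Real.sqrt 2 * Real.sqrt 3) / 6, 1/3]]

def ff (k : Fin 3) : V3 →ₗ[ℝ] ℝ := dotL (fv k)

lemma dotL_apply (v x : V3) : dotL v x = v 0 * x 0 + v 1 * x 1 + v 2 * x 2 := by
  simp [dotL, Fin.sum_univ_three]

lemma h2 : Real.sqrt 2 ^ 2 = 2 := Real.sq_sqrt (by norm_num)
lemma h3 : Real.sqrt 3 ^ 2 = 3 := Real.sq_sqrt (by norm_num)
lemma h6 : (Real.sqrt 2 * Real.sqrt 3) ^ 2 = 6 := by rw [mul_pow, h2, h3]; norm_num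

lemma rn3 : rn 3 = Real.sqrt 2 := by
  have h : (π / ((3:ℕ):ℝ)) = π / 3 := by norm_num
  rw [rn, h, Real.cos_pi_div_three]
  norm_num

lemma pur_zero : pur 3 0 = vv 0 := by
  have h : 2 * π * ((0:ℤ):ℝ) / ((3:ℕ):ℝ) = 0 := by push_cast; ring
  unfold pur vv
  rw [h, Real.cos_zero, Real.sin_zero, rn3]
  funext i; fin_cases i <;>
    simp [Matrix.cons_val_zero, Matrix.cons_val_one, Matrix.head_cons,
      Matrix.cons_val_two, Matrix.tail_cons]

lemma pur_one : pur 3 1 = vv 1 := by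
  have h : 2 * π * ((1:ℤ):ℝ) / ((3:ℕ):ℝ) = π - π/3 := by push_cast; ring
  unfold pur vv
  rw [h, Real.cos_pi_sub, Real.sin_pi_sub, Real.cos_pi_div_three, Real.sin_pi_div_three, rn3]
  funext i; fin_cases i <;>
      simp only [Matrix.cons_val_zero, Matrix.cons_val_one, Matrix.head_cons,
        Matrix.cons_val_two, Matrix.tail_cons] <;> ring

lemma pur_two : pur 3 2 = vv 2 := by
  have h : 2 * π * ((2:ℤ):ℝ) / ((3:ℕ):ℝ) = π + π/3 := by push_cast; ring
  unfold pur vv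
  rw [h, Real.cos_add, Real.sin_add, Real.cos_pi, Real.sin_pi,
    Real.cos_pi_div_three, Real.sin_pi_div_three, rn3]
  funext i; fin_cases i <;>
      simp only [Matrix.cons_val_zero, Matrix.cons_val_one, Matrix.head_cons,
        Matrix.cons_val_two, Matrix.tail_cons] <;> ring

lemma pur_fin (i : Fin 3) : pur 3 (i : ℤ) = vv i := by
  fin_cases i
  · exact pur_zero
  · exact pur_one
  · exact pur_two

lemma vv_mem (k : Fin 3) : vv k ∈ Omega 3 :=
  subset_convexHull ℝ _ ⟨k, (pur_fin k).symm⟩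

lemma f_vv (k j : Fin 3) : ff k (vv j) = if k = j then 1 else 0 := by
  fin_cases k <;> fin_cases j <;> simp [ff, dotL_apply, fv, vv] <;>
    nlinarith [h2, h3, h6, Real.sqrt_nonneg 2, Real.sqrt_nonneg 3]

lemma recon (x : V3) : ∑ k : Fin 3, ff k x • vv k = x := by
  have H2 := h2; have H3 := h3
  funext i
  rw [Finset.sum_apply, Fin.sum_univ_three]
  fin_cases i <;> simp [ff, dotL_apply, fv, vv]
  · linear_combination (x 0 / 2) * H2
  · linear_combination (x 1 * Real.sqrt 3 ^ 2 / 6) * H2 + (x 1 / 3) * H3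
  · ring


lemma ff_mem (k : Fin 3) : ∀ x ∈ Omega 3, 0 ≤ ff k x ∧ ff k x ≤ 1 := by
  intro x hx
  have hsub : Omega 3 ⊆ (ff k) ⁻¹' Set.Icc (0:ℝ) 1 := by
    apply convexHull_min _ ((convex_Icc (0:ℝ) 1).linear_preimage (ff k))
    rintro y ⟨i, rfl⟩
    rw [Set.mem_preimage, pur_fin, f_vv]
    split <;> norm_num
  have := hsub hx
  rw [Set.mem_preimage, Set.mem_Icc] at this
  exact this

lemma u_mem : ∀ x ∈ Omega 3, uEff x = 1 := by
  intro x hx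
  have hsub : Omega 3 ⊆ uEff ⁻¹' {(1:ℝ)} := by
    apply convexHull_min _ ((convex_singleton (1:ℝ)).linear_preimage uEff)
    rintro y ⟨i, rfl⟩
    rw [Set.mem_preimage, pur_fin, Set.mem_singleton_iff]
    fin_cases i <;> rfl
  exact hsub hx

lemma sum_ff (x : V3) : ∑ k : Fin 3, ff k x = uEff x := by
  have : uEff x = x 2 := rfl
  rw [Fin.sum_univ_three, this]
  simp [ff, dotL_apply, fv]
  ring

/-- The entropy function. -/
def Sent : V3 → ℝ := fun x => -∑ k : Fin 3, ff k x * Real.log (ff k x)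

lemma Sent_vv (i : Fin 3) : Sent (vv i) = 0 := by
  fin_cases i <;>
    simp [Sent, Fin.sum_univ_three, f_vv, Real.log_one]

lemma mix_log {l : ℕ} (q : Fin l → ℝ) (hdis : ∀ i j, i ≠ j → q i = 0 ∨ q j = 0) :
    -((∑ i, q i) * Real.log (∑ i, q i)) = ∑ i, -(q i * Real.log (q i)) := by
  by_cases hall : ∀ i, q i = 0
  · simp [hall]
  · push_neg at hall
    obtain ⟨i0, h0⟩ := hall
    have hz : ∀ j ∈ Finset.univ, j ≠ i0 → q j = 0 := by
      intro j _ hj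
      rcases hdis i0 j (fun h => hj h.symm) with h | h
      · exact absurd h h0
      · exact h
    rw [Finset.sum_eq_single i0 hz (by simp),
      Finset.sum_eq_single i0 (fun j hj hji => by rw [hz j hj hji]; simp) (by simp)]

lemma term_split (a b : ℝ) (ha : 0 ≤ a) (hb : 0 ≤ b) :
    -(a * b * Real.log (a * b)) = a * (-(b * Real.log b)) - a * Real.log a * b := by
  rcases eq_or_lt_of_le ha with h | h
  · simp [← h]
  rcases eq_or_lt_of_le hb with h' | h'
  · simp [← h']
  rw [Real.log_mul (ne_of_gt h) (ne_of_gt h')]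
  ring

lemma mixing : IsEntropyOfMixing (Omega 3) Sent := by
  constructor
  · intro ω hω
    have hmem : ω ∈ {x : V3 | ∃ i : Fin 3, x = pur 3 (i : ℤ)} :=
      extremePoints_convexHull_subset hω
    obtain ⟨i, rfl⟩ := hmem
    rw [pur_fin]
    exact Sent_vv i
  · intro l ω hΩ hpd p hp hpsum
    obtain ⟨e, heff, hesum, hdual⟩ := hpd
    set c : Fin l → Fin 3 → ℝ := fun i k => ff k (ω i) with hc
    have hc0 : ∀ i k, 0 ≤ c i k := fun i k => (ff_mem k _ (hΩ i)).1
    have hcsum : ∀ i, ∑ k, c i k = 1 := fun i => by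
      rw [hc]; rw [sum_ff]; exact u_mem _ (hΩ i)
    have hrec : ∀ i, ω i = ∑ k, c i k • vv k := fun i => (recon (ω i)).symm
    have happ : ∀ i j, e i (ω j) = ∑ k, c j k * e i (vv k) := by
      intro i j
      conv_lhs => rw [hrec j]
      rw [map_sum]
      simp only [map_smul, smul_eq_mul]
    have hdisj : ∀ i j k, i ≠ j → c i k = 0 ∨ c j k = 0 := by
      intro i j k hij
      by_contra hcon
      push_neg at hcon
      obtain ⟨hcik, hcjk⟩ := hcon
      have hik : 0 < c i k := (hc0 i k).lt_of_ne (Ne.symm hcik)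
      have hjk : 0 < c j k := (hc0 j k).lt_of_ne (Ne.symm hcjk)
      have hA : (∑ k', c i k' * e i (vv k')) = 1 := by
        have h := happ i i
        rw [hdual i i] at h
        simpa using h.symm
      have hsum0 : ∑ k', c i k' * (1 - e i (vv k')) = 0 := by
        have hh : ∑ k', c i k' * (1 - e i (vv k'))
            = (∑ k', c i k') - ∑ k', c i k' * e i (vv k') := by
          rw [← Finset.sum_sub_distrib]
          exact Finset.sum_congr rfl fun k' _ => by ring
        rw [hh, hcsum i, hA, sub_self]
      have hzero := (Finset.sum_eq_zero_iff_of_nonneg (fun k' _ =>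
        mul_nonneg (hc0 i k') (by linarith [(heff i _ (vv_mem k')).2]))).1 hsum0 k
        (Finset.mem_univ k)
      have haik : e i (vv k) = 1 := by
        rcases mul_eq_zero.1 hzero with h | h
        · exact absurd h (ne_of_gt hik)
        · linarith
      have hB : ∑ k', c j k' * e i (vv k') = 0 := by
        have h := happ i j
        rw [hdual i j] at h
        simpa [hij] using h.symm
      have hBk := (Finset.sum_eq_zero_iff_of_nonneg (fun k' _ =>
        mul_nonneg (hc0 j k') (heff i _ (vv_mem k')).1)).1 hB k (Finset.mem_univ k)
      rw [haik, mul_one] at hBk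
      exact absurd hBk (ne_of_gt hjk)
    have hfk : ∀ k, ff k (∑ i, p i • ω i) = ∑ i, p i * c i k := by
      intro k
      rw [map_sum]
      simp only [map_smul, smul_eq_mul]
      rfl
    have hSω : ∀ i, Sent (ω i) = ∑ k : Fin 3, -(c i k * Real.log (c i k)) := by
      intro i
      rw [Sent, ← Finset.sum_neg_distrib]
    calc Sent (∑ i, p i • ω i)
        = -∑ k : Fin 3, (∑ i, p i * c i k) * Real.log (∑ i, p i * c i k) := by
          rw [Sent]
          congr 1
          exact Finset.sum_congr rfl fun k _ => by rw [hfk k]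
      _ = ∑ k : Fin 3, -((∑ i, p i * c i k) * Real.log (∑ i, p i * c i k)) := by
          rw [Finset.sum_neg_distrib]
      _ = ∑ k : Fin 3, ∑ i, -(p i * c i k * Real.log (p i * c i k)) := by
          refine Finset.sum_congr rfl fun k _ => ?_
          refine mix_log (fun i => p i * c i k) fun i j hij => ?_
          rcases hdisj i j k hij with h | h
          · exact Or.inl (by simp [h])
          · exact Or.inr (by simp [h])
      _ = ∑ i, ∑ k : Fin 3, -(p i * c i k * Real.log (p i * c i k)) := Finset.sum_comm
      _ = ∑ i, (p i * Sent (ω i) - p i * Real.log (p i)) := by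
          refine Finset.sum_congr rfl fun i _ => ?_
          have hterm : ∀ k : Fin 3, -(p i * c i k * Real.log (p i * c i k))
              = p i * (-(c i k * Real.log (c i k))) - p i * Real.log (p i) * c i k :=
            fun k => term_split (p i) (c i k) (hp i) (hc0 i k)
          rw [Finset.sum_congr rfl fun k _ => hterm k, Finset.sum_sub_distrib,
            ← Finset.mul_sum, ← Finset.mul_sum, hcsum i, hSω i]
          ring
      _ = (∑ i, p i * Sent (ω i)) - ∑ i, p i * Real.log (p i) := Finset.sum_sub_distrib _ _

end T1

/-- Every element of `Ω₃` has a unique representation as a convex combination of the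
three pure states, and `S(p ω₀ + q ω₁ + r ω₂) = −p log p − q log q − r log r`
defines an entropy of mixing on `Ω₃`. -/
theorem stmt1 :
    (∀ x ∈ Omega 3, ∃! t : ℝ × ℝ × ℝ,
        0 ≤ t.1 ∧ 0 ≤ t.2.1 ∧ 0 ≤ t.2.2 ∧ t.1 + t.2.1 + t.2.2 = 1 ∧
        x = t.1 • pur 3 0 + t.2.1 • pur 3 1 + t.2.2 • pur 3 2) ∧
    ∃ S : V3 → ℝ,
      (∀ p q r : ℝ, 0 ≤ p → 0 ≤ q → 0 ≤ r → p + q + r = 1 →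
        S (p • pur 3 0 + q • pur 3 1 + r • pur 3 2)
          = -(p * Real.log p) - q * Real.log q - r * Real.log r) ∧
      IsEntropyOfMixing (Omega 3) S := by
  constructor
  · intro x hx
    refine ⟨(T1.ff 0 x, T1.ff 1 x, T1.ff 2 x), ⟨(T1.ff_mem 0 x hx).1, (T1.ff_mem 1 x hx).1,
      (T1.ff_mem 2 x hx).1, ?_, ?_⟩, ?_⟩
    · have h := T1.sum_ff x
      rw [Fin.sum_univ_three] at h
      rw [h]
      exact T1.u_mem x hx
    · have h := T1.recon x
      rw [Fin.sum_univ_three] at h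
      rw [T1.pur_zero, T1.pur_one, T1.pur_two]
      exact h.symm
    · rintro ⟨a, b, cc⟩ ⟨_, _, _, _, hxeq⟩
      rw [T1.pur_zero, T1.pur_one, T1.pur_two] at hxeq
      have hval : ∀ k : Fin 3, T1.ff k x
          = a * T1.ff k (T1.vv 0) + b * T1.ff k (T1.vv 1) + cc * T1.ff k (T1.vv 2) := by
        intro k
        rw [hxeq]
        simp [map_add, map_smul, smul_eq_mul]
      have e0 := hval 0
      have e1 := hval 1
      have e2 := hval 2
      simp [T1.f_vv] at e0 e1 e2
      simp [Prod.ext_iff, e0, e1, e2]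
  · refine ⟨T1.Sent, ?_, T1.mixing⟩
    intro p q r _ _ _ _
    rw [T1.pur_zero, T1.pur_one, T1.pur_two]
    have hk : ∀ k : Fin 3, T1.ff k (p • T1.vv 0 + q • T1.vv 1 + r • T1.vv 2)
        = p * T1.ff k (T1.vv 0) + q * T1.ff k (T1.vv 1) + r * T1.ff k (T1.vv 2) := by
      intro k
      simp [map_add, map_smul, smul_eq_mul]
    simp only [T1.Sent]
    rw [Fin.sum_univ_three, hk 0, hk 1, hk 2]
    simp [T1.f_vv]
    ring
end
end

section
/- The function S : Ω_∞ → ℝ defined by S(x, y, 1) = H((1 + √(x²+y²))/2) is an entropy of mixing on the disk state space Ω_∞. -/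
open Real

noncomputable section

-- Auxiliary lemmas --------------------------------------------------------

lemma eval3 (e : V3 →ₗ[ℝ] ℝ) (v : V3) :
    e v = v 0 * e (Pi.single 0 1) + v 1 * e (Pi.single 1 1) + v 2 * e (Pi.single 2 1) := by
  have hv : v = v 0 • (Pi.single 0 1 : V3) + v 1 • (Pi.single 1 1 : V3) +
      v 2 • (Pi.single 2 1 : V3) := by
    funext k; fin_cases k <;> simp [Pi.single_apply]
  conv_lhs => rw [hv]
  simp [smul_eq_mul]

lemma sq_zero_of_sum_sq_le (u v : ℝ) (h : u^2 + v^2 ≤ 0) : u = 0 ∧ v = 0 :=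
  ⟨by nlinarith [sq_nonneg u, sq_nonneg v], by nlinarith [sq_nonneg u, sq_nonneg v]⟩

lemma cauchy2 (a b x y : ℝ) : (x*a + y*b)^2 ≤ (a^2+b^2)*(x^2+y^2) := by
  nlinarith [sq_nonneg (a*y - b*x)]

lemma aux_eq_one (s d r : ℝ) (hs : 0 < s) (hsd : s ≤ d) (hCS : d^2 ≤ s^2 * r)
    (hr : r ≤ 1) : r = 1 ∧ d = s := by
  have h1 : s^2 ≤ d^2 := by nlinarith
  have h2 : 1 ≤ r := by nlinarith [mul_pos hs hs]
  have h3 : d ≤ s := by nlinarith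
  exact ⟨le_antisymm hr h2, le_antisymm h3 hsd⟩

lemma aux_perp (a b x y s : ℝ) (hd : x*a + y*b = s) (hs2 : s^2 = a^2+b^2)
    (G1 : x^2+y^2 = 1) : a*y = b*x := by
  have h : (a*y - b*x)^2 = 0 := by
    linear_combination (a^2+b^2)*G1 - (x*a+y*b+s)*hd - hs2
  have := pow_eq_zero_iff (n := 2) (by norm_num) |>.mp h
  linarith

lemma aux_t (s t : ℝ) (h0' : s*t + 1 - s = 0) (hs : 0 < s) (hh : s ≤ 1/2) :
    t ≤ -1 := by nlinarith

lemma aux_neg1 (t r : ℝ) (htCS : t^2 ≤ r) (hr : r ≤ 1) (ht : t ≤ -1) :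
    t = -1 ∧ r = 1 := by
  have h2 : t^2 ≤ 1 := le_trans htCS hr
  have hge : -1 ≤ t := by nlinarith
  have ht1 : t = -1 := le_antisymm ht hge
  have h3 : (1:ℝ) ≤ r := by rw [ht1] at htCS; linarith [htCS]
  exact ⟨ht1, le_antisymm hr h3⟩

lemma key_real (a b c xi yi xj yj : ℝ)
    (heff : ∀ x y : ℝ, x^2 + y^2 ≤ 1 → 0 ≤ x*a + y*b + c ∧ x*a + y*b + c ≤ 1)
    (hri : xi^2 + yi^2 ≤ 1) (hrj : xj^2 + yj^2 ≤ 1)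
    (h1 : xi*a + yi*b + c = 1) (h0 : xj*a + yj*b + c = 0) :
    xi^2 + yi^2 = 1 ∧ xj = -xi ∧ yj = -yi := by
  have hab : 0 < a^2 + b^2 := by
    by_contra h
    push_neg at h
    obtain ⟨ha, hb⟩ := sq_zero_of_sum_sq_le a b h
    rw [ha, hb] at h1 h0
    linarith
  set s := Real.sqrt (a^2 + b^2) with hsdef
  have hs2 : s^2 = a^2 + b^2 := Real.sq_sqrt hab.le
  have hs : 0 < s := Real.sqrt_pos.mpr hab
  have hunit : (a/s)^2 + (b/s)^2 ≤ 1 := by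
    have : (a/s)^2 + (b/s)^2 = 1 := by field_simp; linarith [hs2]
    linarith
  have hunit' : (-(a/s))^2 + (-(b/s))^2 ≤ 1 := by
    have : (-(a/s))^2 + (-(b/s))^2 = (a/s)^2 + (b/s)^2 := by ring
    linarith
  have hx : a/s*a + b/s*b = s := by field_simp; linarith [hs2]
  have hE1 : s + c ≤ 1 := by
    have h := (heff _ _ hunit).2
    linarith [h, hx]
  have hE2 : s ≤ c := by
    have h := (heff _ _ hunit').1
    have hx' : -(a/s)*a + -(b/s)*b = -s := by linarith [hx]
    linarith [h, hx']
  clear heff hunit hunit' hx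
  have hds : s ≤ xi*a + yi*b := by linarith
  have hCS : (xi*a + yi*b)^2 ≤ s^2 * (xi^2 + yi^2) := by
    rw [hs2]; exact cauchy2 a b xi yi
  obtain ⟨G1, hd⟩ := aux_eq_one s (xi*a + yi*b) (xi^2+yi^2) hs hds hCS hri
  have hperp : a*yi = b*xi := aux_perp a b xi yi s hd hs2 G1
  have haa : a = s * xi := by linear_combination -a*G1 + yi*hperp + xi*hd
  have hbb : b = s * yi := by linear_combination -b*G1 - xi*hperp + yi*hd
  have hc : c = 1 - s := by linarith
  have hshalf : s ≤ 1/2 := by linarith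
  have h0' : s * (xi*xj + yi*yj) + 1 - s = 0 := by
    rw [haa, hbb] at h0
    linear_combination h0 - hc
  have ht : xi*xj + yi*yj ≤ -1 := aux_t s _ h0' hs hshalf
  have htCS : (xi*xj + yi*yj)^2 ≤ xj^2+yj^2 := by
    calc (xi*xj + yi*yj)^2 = (xj*xi + yj*yi)^2 := by ring
    _ ≤ (xi^2+yi^2)*(xj^2+yj^2) := cauchy2 xi yi xj yj
    _ = xj^2+yj^2 := by rw [G1]; ring
  obtain ⟨ht1, hrj1⟩ := aux_neg1 _ _ htCS hrj ht
  have hzero : (xi+xj)^2 + (yi+yj)^2 ≤ 0 := by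
    have : (xi+xj)^2 + (yi+yj)^2 = 0 := by linear_combination G1 + hrj1 + 2*ht1
    linarith
  obtain ⟨hu, hv⟩ := sq_zero_of_sum_sq_le _ _ hzero
  exact ⟨G1, by linarith, by linarith⟩

lemma key_lemma (e : V3 →ₗ[ℝ] ℝ) (he : IsEffect OmegaInf e)
    (wi wj : V3) (hi : wi ∈ OmegaInf) (hj : wj ∈ OmegaInf)
    (h1 : e wi = 1) (h0 : e wj = 0) :
    (wi 0)^2 + (wi 1)^2 = 1 ∧ wj 0 = -(wi 0) ∧ wj 1 = -(wi 1) := by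
  obtain ⟨hzi, hri⟩ := hi
  obtain ⟨hzj, hrj⟩ := hj
  rw [eval3, hzi] at h1
  rw [eval3, hzj] at h0
  have heff : ∀ x y : ℝ, x^2 + y^2 ≤ 1 →
      0 ≤ x * e (Pi.single 0 1) + y * e (Pi.single 1 1) + e (Pi.single 2 1) ∧
      x * e (Pi.single 0 1) + y * e (Pi.single 1 1) + e (Pi.single 2 1) ≤ 1 := by
    intro x y hxy
    have hm : (![x,y,1] : V3) ∈ OmegaInf := by
      constructor
      · simp [OmegaInf]
      · show (_:V3) 0 ^2 + (_:V3) 1^2 ≤ 1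
        simpa using hxy
    have h := he _ hm
    rw [eval3] at h
    simpa using h
  exact key_real _ _ _ _ _ _ _ heff hri hrj (by linarith) (by linarith)

lemma S_pure (x y : ℝ) (h : x^2 + y^2 = 1) :
    H ((1 + Real.sqrt (x^2 + y^2))/2) = 0 := by
  rw [h, Real.sqrt_one]
  norm_num [H]

lemma extreme_unit (ω : V3) (hω : ω ∈ Set.extremePoints ℝ OmegaInf) :
    (ω 0)^2 + (ω 1)^2 = 1 := by
  obtain ⟨⟨hz, hr⟩, hext⟩ := hω
  by_contra h
  have hlt : (ω 0)^2 + (ω 1)^2 < 1 := lt_of_le_of_ne hr h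
  set t : ℝ := (1 - ((ω 0)^2 + (ω 1)^2))/4 with htdef
  have ht0 : 0 < t := by rw [htdef]; linarith
  have ht4 : t ≤ 1/4 := by rw [htdef]; nlinarith [sq_nonneg (ω 0), sq_nonneg (ω 1)]
  have hb1 : ω 0 ≤ 1 := by nlinarith [sq_nonneg (ω 1), sq_nonneg (ω 0 - 1)]
  have hb2 : -1 ≤ ω 0 := by nlinarith [sq_nonneg (ω 1), sq_nonneg (ω 0 + 1)]
  set d : V3 := Pi.single 0 t with hddef
  have hd0 : d 0 = t := by simp [hddef]
  have hd1 : d 1 = 0 := by simp [hddef]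
  have hd2 : d 2 = 0 := by simp [hddef]
  have hmem : ∀ ε : ℝ, ε = 1 ∨ ε = -1 → ω + ε • d ∈ OmegaInf := by
    intro ε hε
    constructor
    · show (ω + ε • d) 2 = 1
      simp [hd2, hz]
    · show ((ω + ε • d) 0)^2 + ((ω + ε • d) 1)^2 ≤ 1
      have e0 : (ω + ε • d) 0 = ω 0 + ε * t := by simp [hd0]
      have e1 : (ω + ε • d) 1 = ω 1 := by simp [hd1]
      rw [e0, e1]
      rcases hε with h | h <;> rw [h] <;> nlinarith [hlt, ht0, ht4, hb1, hb2]
  have hmem1 := hmem 1 (Or.inl rfl)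
  have hmem2 := hmem (-1) (Or.inr rfl)
  have hseg : ω ∈ openSegment ℝ (ω + (-1 : ℝ) • d) (ω + (1 : ℝ) • d) := by
    refine ⟨1/2, 1/2, by norm_num, by norm_num, by norm_num, ?_⟩
    module
  have heq := hext hmem2 hmem1 hseg
  have h0 := congrFun heq 0
  have : ω 0 + (-1) * t = ω 0 := by
    have e0 : (ω + (-1 : ℝ) • d) 0 = ω 0 + (-1) * t := by simp [hd0]
    rw [← e0]; exact h0
  linarith

/-- `S(x, y, 1) = H((1 + √(x² + y²))/2)` is an entropy of mixing on the disk `Ω_∞`. -/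
theorem stmt2 :
    IsEntropyOfMixing OmegaInf
      (fun x => H ((1 + Real.sqrt ((x 0)^2 + (x 1)^2)) / 2)) := by
  constructor
  · intro ω hω
    exact S_pure _ _ (extreme_unit ω hω)
  · intro l ω hω hpd p hp hpsum
    obtain ⟨e, he, hesum, hδ⟩ := hpd
    match l, ω, hω, e, he, hesum, hδ, p, hp, hpsum with
    | 0, ω, hω, e, he, hesum, hδ, p, hp, hpsum =>
      exfalso
      have h := LinearMap.congr_fun hesum (Pi.single 2 1)
      simp [uEff, Pi.single_apply] at h
    | 1, ω, hω, e, he, hesum, hδ, p, hp, hpsum =>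
      have hp0 : p 0 = 1 := by simpa using hpsum
      simp [Fin.sum_univ_one, hp0, Real.log_one]
    | 2, ω, hω, e, he, hesum, hδ, p, hp, hpsum =>
      have h00 : e 0 (ω 0) = 1 := by simpa using hδ 0 0
      have h01 : e 0 (ω 1) = 0 := by simpa using hδ 0 1
      obtain ⟨hpure0, hx, hy⟩ := key_lemma (e 0) (he 0) (ω 0) (ω 1) (hω 0) (hω 1) h00 h01
      have hpure1 : (ω 1 0)^2 + (ω 1 1)^2 = 1 := by
        rw [hx, hy]; linear_combination hpure0
      have hpsum2 : p 0 + p 1 = 1 := by simpa [Fin.sum_univ_two] using hpsum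
      simp only [Fin.sum_univ_two]
      have c0 : (p 0 • ω 0 + p 1 • ω 1) 0 = p 0 * ω 0 0 + p 1 * ω 1 0 := rfl
      have c1 : (p 0 • ω 0 + p 1 • ω 1) 1 = p 0 * ω 0 1 + p 1 * ω 1 1 := rfl
      have harg : ((p 0 • ω 0 + p 1 • ω 1) 0)^2 + ((p 0 • ω 0 + p 1 • ω 1) 1)^2
          = (p 0 - p 1)^2 := by
        rw [c0, c1, hx, hy]; linear_combination (p 0 - p 1)^2 * hpure0
      rw [harg, Real.sqrt_sq_eq_abs, S_pure _ _ hpure0, S_pure _ _ hpure1]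
      rcases le_total (p 1) (p 0) with hc | hc
      · rw [abs_of_nonneg (by linarith : (0:ℝ) ≤ p 0 - p 1)]
        have harg2 : (1 + (p 0 - p 1))/2 = p 0 := by linarith
        rw [harg2]
        have h1p : 1 - p 0 = p 1 := by linarith
        simp only [H]
        rw [h1p]
        ring
      · rw [abs_of_nonpos (by linarith : p 0 - p 1 ≤ (0:ℝ)), neg_sub]
        have harg2 : (1 + (p 1 - p 0))/2 = p 1 := by linarith
        rw [harg2]
        have h1p : 1 - p 1 = p 0 := by linarith
        simp only [H]
        rw [h1p]
        ring
    | (n+3), ω, hω, e, he, hesum, hδ, p, hp, hpsum =>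
      exfalso
      set i0 : Fin (n+3) := ⟨0, by omega⟩
      set i1 : Fin (n+3) := ⟨1, by omega⟩
      set i2 : Fin (n+3) := ⟨2, by omega⟩
      have h00 : e i0 (ω i0) = 1 := by rw [hδ, if_pos rfl]
      have h01 : e i0 (ω i1) = 0 := by
        rw [hδ, if_neg]; simp [i0, i1, Fin.ext_iff]
      have h02 : e i0 (ω i2) = 0 := by
        rw [hδ, if_neg]; simp [i0, i2, Fin.ext_iff]
      have h11 : e i1 (ω i1) = 1 := by rw [hδ, if_pos rfl]
      have h12 : e i1 (ω i2) = 0 := by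
        rw [hδ, if_neg]; simp [i1, i2, Fin.ext_iff]
      obtain ⟨hp0, hx1, hy1⟩ := key_lemma (e i0) (he i0) (ω i0) (ω i1) (hω i0) (hω i1) h00 h01
      obtain ⟨-, hx2, hy2⟩ := key_lemma (e i0) (he i0) (ω i0) (ω i2) (hω i0) (hω i2) h00 h02
      obtain ⟨hp1, hx3, hy3⟩ := key_lemma (e i1) (he i1) (ω i1) (ω i2) (hω i1) (hω i2) h11 h12
      have hx0 : ω i1 0 = 0 := by linarith [hx1, hx2, hx3]
      have hy0 : ω i1 1 = 0 := by linarith [hy1, hy2, hy3]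
      rw [hx0, hy0] at hp1
      norm_num at hp1
end
end

section
/- If σ₁, σ₂ ∈ Ω_∞ are perfectly distinguishable states of the disk state space, then there exists θ ∈ [0, 2π) such that σ₁ = ω_θ^∞ and σ₂ = ω_{θ+π}^∞; i.e., the only perfectly distinguishable pairs in the disk are pairs of antipodal pure states. -/
open Real

noncomputable section

lemma eval_expand (e : V3 →ₗ[ℝ] ℝ) (v : V3) :
    e v = v 0 * e ![1,0,0] + v 1 * e ![0,1,0] + v 2 * e ![0,0,1] := by
  have hv : v = v 0 • ![1,0,0] + v 1 • ![0,1,0] + v 2 • ![0,0,1] := by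
    funext i; fin_cases i <;> simp
  conv_lhs => rw [hv]
  simp only [map_add, map_smul, smul_eq_mul]

set_option maxHeartbeats 1000000 in
/-- Perfectly distinguishable pairs in the disk `Ω_∞` are exactly antipodal pairs of
pure states. -/
theorem stmt7 (σ₁ σ₂ : V3) (h1 : σ₁ ∈ OmegaInf) (h2 : σ₂ ∈ OmegaInf)
    (h : PerfDist OmegaInf ![σ₁, σ₂]) :
    ∃ θ : ℝ, 0 ≤ θ ∧ θ < 2 * π ∧ σ₁ = purInf θ ∧ σ₂ = purInf (θ + π) := by
  obtain ⟨e, heff, -, hval⟩ := h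
  set a := e 0 ![1,0,0] with ha
  set b := e 0 ![0,1,0] with hb
  set c := e 0 ![0,0,1] with hc
  obtain ⟨hz1, hd1⟩ := h1
  obtain ⟨hz2, hd2⟩ := h2
  have hs1 : a * σ₁ 0 + b * σ₁ 1 + c = 1 := by
    have := hval 0 0
    rw [Matrix.cons_val_zero, eval_expand, hz1] at this
    simp at this; linarith
  have hs2 : a * σ₂ 0 + b * σ₂ 1 + c = 0 := by
    have := hval 0 1
    rw [Matrix.cons_val_one, Matrix.cons_val_zero, eval_expand, hz2] at this
    rw [if_neg (by decide)] at this; linarith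
  set r := Real.sqrt (a^2 + b^2) with hrdef
  have hr0 : 0 ≤ r := Real.sqrt_nonneg _
  have hr2 : r^2 = a^2 + b^2 := Real.sq_sqrt (by positivity)
  rcases eq_or_lt_of_le hr0 with hrz | hrpos
  · exfalso
    have hab : a^2 + b^2 = 0 := by rw [← hr2, ← hrz]; ring
    have haz : a = 0 := by nlinarith [sq_nonneg a, sq_nonneg b]
    have hbz : b = 0 := by nlinarith [sq_nonneg a, sq_nonneg b]
    rw [haz, hbz] at hs1 hs2; linarith
  have hrne : r ≠ 0 := ne_of_gt hrpos
  have hmem : ∀ s : ℝ, s^2 = 1 → (![s*a/r, s*b/r, 1] : V3) ∈ OmegaInf := by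
    intro s hs
    refine ⟨rfl, ?_⟩
    show (s*a/r)^2 + (s*b/r)^2 ≤ 1
    have : (s*a/r)^2 + (s*b/r)^2 = s^2 * (a^2+b^2) / r^2 := by ring
    rw [this, ← hr2, hs, one_mul, div_self (pow_ne_zero 2 hrne)]
  have heval : ∀ s : ℝ, e 0 ![s*a/r, s*b/r, 1] = s * r + c := by
    intro s
    rw [eval_expand]
    simp only [Matrix.cons_val_zero, Matrix.cons_val_one, Matrix.head_cons,
      Matrix.cons_val_two, Matrix.tail_cons]
    rw [← ha, ← hb, ← hc,
      show s*a/r * a + s*b/r * b + 1*c = s * ((a^2+b^2)/r) + c from by ring,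
      ← hr2, pow_two, mul_div_assoc, div_self hrne, mul_one]
  have hplus : c + r ≤ 1 := by
    have := (heff 0 _ (hmem 1 (by norm_num))).2
    rw [heval] at this; linarith
  have hminus : 0 ≤ c - r := by
    have := (heff 0 _ (hmem (-1) (by norm_num))).1
    rw [heval] at this; linarith
  clear_value r a b c
  clear heval hmem hval heff ha hb hc hrdef e
  have hge : r ≤ a * σ₁ 0 + b * σ₁ 1 := by linarith
  have hle : a * σ₂ 0 + b * σ₂ 1 ≤ -r := by linarith
  have k1 : (r * σ₁ 0 - a)^2 + (r * σ₁ 1 - b)^2 ≤ 0 := by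
    nlinarith [mul_le_mul_of_nonneg_left hd1 (sq_nonneg r),
      mul_le_mul_of_nonneg_left hge hr0, hr2]
  have k2 : (r * σ₂ 0 + a)^2 + (r * σ₂ 1 + b)^2 ≤ 0 := by
    nlinarith [mul_le_mul_of_nonneg_left hd2 (sq_nonneg r),
      mul_le_mul_of_nonneg_left hle hr0, hr2]
  have sqz : ∀ u v : ℝ, u^2 + v^2 ≤ 0 → u = 0 ∧ v = 0 := by
    intro u v huv
    have hu : u^2 = 0 := le_antisymm (by nlinarith [sq_nonneg v]) (sq_nonneg u)
    have hv : v^2 = 0 := le_antisymm (by nlinarith [sq_nonneg u]) (sq_nonneg v)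
    exact ⟨sq_eq_zero_iff.mp hu, sq_eq_zero_iff.mp hv⟩
  have e1a : r * σ₁ 0 = a := by have := (sqz _ _ k1).1; linarith
  have e1b : r * σ₁ 1 = b := by have := (sqz _ _ k1).2; linarith
  have e2a : r * σ₂ 0 = -a := by have := (sqz _ _ k2).1; linarith
  have e2b : r * σ₂ 1 = -b := by have := (sqz _ _ k2).2; linarith
  set x := σ₁ 0
  set y := σ₁ 1
  have hx2 : σ₂ 0 = -x := mul_left_cancel₀ hrne (by rw [e2a, ← e1a]; ring)
  have hy2 : σ₂ 1 = -y := mul_left_cancel₀ hrne (by rw [e2b, ← e1b]; ring)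
  have hunit : x^2 + y^2 = 1 := by
    have h' : r^2 * (x^2 + y^2) = r^2 * 1 := by nlinarith [e1a, e1b]
    exact mul_left_cancel₀ (pow_ne_zero 2 hrne) h'
  have hx1 : -1 ≤ x := by nlinarith [sq_nonneg y]
  have hx1' : x ≤ 1 := by nlinarith [sq_nonneg y]
  set θ := if 0 ≤ y then Real.arccos x else 2*π - Real.arccos x with hθ
  have hcos : Real.cos θ = x := by
    rw [hθ]; split_ifs
    · exact Real.cos_arccos hx1 hx1'
    · rw [show 2*π - Real.arccos x = -(Real.arccos x) + 2*π by ring,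
        Real.cos_add_two_pi, Real.cos_neg]
      exact Real.cos_arccos hx1 hx1'
  have hsin : Real.sin θ = y := by
    rw [hθ]; split_ifs with hy
    · rw [Real.sin_arccos, show 1 - x^2 = y^2 by linarith]
      exact Real.sqrt_sq hy
    · rw [show 2*π - Real.arccos x = -(Real.arccos x) + 2*π by ring,
        Real.sin_add_two_pi, Real.sin_neg, Real.sin_arccos,
        show 1 - x^2 = y^2 by linarith, Real.sqrt_sq_eq_abs,
        abs_of_neg (lt_of_not_ge hy)]
      ring
  refine ⟨θ, ?_, ?_, ?_, ?_⟩
  · rw [hθ]; split_ifs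
    · exact Real.arccos_nonneg x
    · have := Real.arccos_le_pi x
      have := Real.pi_pos
      linarith
  · rw [hθ]; split_ifs with hy
    · have := Real.arccos_le_pi x
      have := Real.pi_pos
      linarith
    · have hxlt : x < 1 := by
        rcases lt_or_eq_of_le hx1' with h' | h'
        · exact h'
        · exfalso
          have hy0 : y = 0 := by nlinarith
          exact hy (le_of_eq hy0.symm)
      have := (Real.arccos_pos).2 hxlt
      linarith
  · funext i; fin_cases i <;> simp [purInf, hcos, hsin, hz1] <;> rfl
  · funext i; fin_cases i <;>
      simp [purInf, Real.cos_add_pi, Real.sin_add_pi, hcos, hsin, hx2, hy2, hz2]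
end
end

section
/- Let n ≥ 4 be an even integer and let i be any index (mod n). Every state σ on the segment [ω_{i−1}^n, ω_i^n] is perfectly distinguishable from every state τ on the segment [ω_{i+n/2−1}^n, ω_{i+n/2}^n]; the measurement {e_i^n, u − e_i^n} distinguishes them. -/
open Real

noncomputable section

namespace Stmt8Aux

lemma dotL_apply (v w : V3) : dotL v w = v 0 * w 0 + v 1 * w 1 + v 2 * w 2 := by
  simp [dotL, Fin.sum_univ_three]

lemma cos_pos_of (n : ℕ) (hn : 4 ≤ n) : 0 < Real.cos (π / n) := by
  have h4 : (4:ℝ) ≤ n := by exact_mod_cast hn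
  have hπ := Real.pi_pos
  apply Real.cos_pos_of_mem_Ioo
  constructor
  · have : (0:ℝ) < π / n := by positivity
    linarith
  · have : π / n ≤ π / 4 := by
      apply div_le_div_of_nonneg_left hπ.le (by norm_num) h4
    linarith

lemma rn_sq (n : ℕ) (hn : 4 ≤ n) : rn n ^ 2 = 1 / Real.cos (π / n) := by
  have := cos_pos_of n hn
  rw [rn, Real.sq_sqrt (by positivity)]

lemma effE_pur (n : ℕ) (hn : 4 ≤ n) (i j : ℤ) :
    effE n i (pur n j) =
      (Real.cos ((2 * ((i : ℝ) - (j : ℝ)) - 1) * π / n) / Real.cos (π / n) + 1) / 2 := by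
  have hc := cos_pos_of n hn
  have hc0 : Real.cos (π / n) ≠ 0 := ne_of_gt hc
  have hn0 : (n : ℝ) ≠ 0 := by
    have : (4:ℝ) ≤ n := by exact_mod_cast hn
    linarith
  have hr := rn_sq n hn
  have h1 : Real.cos ((2*(i:ℝ)-1) * π / n) * Real.cos (2 * π * j / n)
      + Real.sin ((2*(i:ℝ)-1) * π / n) * Real.sin (2 * π * j / n)
      = Real.cos ((2 * ((i : ℝ) - (j : ℝ)) - 1) * π / n) := by
    rw [← Real.cos_sub]
    congr 1
    field_simp
    ring
  rw [effE, pur, dotL_apply]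
  simp only [Pi.smul_apply, smul_eq_mul, Matrix.cons_val_zero, Matrix.cons_val_one,
    Matrix.head_cons, Matrix.cons_val_two, Matrix.tail_cons]
  linear_combination (Real.cos (2 * π * j / n) * Real.cos ((2*(i:ℝ)-1) * π / n) / 2
      + Real.sin (2 * π * j / n) * Real.sin ((2*(i:ℝ)-1) * π / n) / 2) * hr
    + (1 / (2 * Real.cos (π / n))) * h1

lemma abs_cos_aux (n : ℕ) (hn : 4 ≤ n) (s : ℤ) (h1 : 1 ≤ s) (h2 : s ≤ (n:ℤ) - 1) :
    |Real.cos ((s:ℝ) * π / n)| ≤ Real.cos (π / n) := by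
  have hπ := Real.pi_pos
  have hn4 : (4:ℝ) ≤ n := by exact_mod_cast hn
  have hn0 : (0:ℝ) < n := by linarith
  have hs1 : (1:ℝ) ≤ (s:ℝ) := by exact_mod_cast h1
  have hs2 : (s:ℝ) ≤ (n:ℝ) - 1 := by
    have : ((s:ℤ):ℝ) ≤ (((n:ℤ) - 1 : ℤ):ℝ) := by exact_mod_cast h2
    push_cast at this; linarith
  have hx1 : π / n ≤ (s:ℝ) * π / n := by
    rw [div_le_div_iff₀ hn0 hn0]
    nlinarith [mul_nonneg (mul_nonneg (by linarith : (0:ℝ) ≤ (s:ℝ) - 1) hπ.le) hn0.le]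
  have hx2 : (s:ℝ) * π / n ≤ π - π / n := by
    have heq : ((n:ℝ) - 1) * π / n = π - π / n := by field_simp
    calc (s:ℝ) * π / n ≤ ((n:ℝ) - 1) * π / n := by gcongr
      _ = π - π / n := heq
  have hπn : 0 < π / n := by positivity
  rw [abs_le]
  constructor
  · have := Real.cos_le_cos_of_nonneg_of_le_pi (x := (s:ℝ) * π / n) (y := π - π / n)
      (by linarith) (by linarith) hx2
    rw [Real.cos_pi_sub] at this
    linarith
  · exact Real.cos_le_cos_of_nonneg_of_le_pi (by linarith) (by linarith) hx1

lemma key_bound (n m : ℕ) (hn : 4 ≤ n) (hm : n = 2 * m) (k : ℤ) :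
    |Real.cos ((2 * (k:ℝ) - 1) * π / n)| ≤ Real.cos (π / n) := by
  have hπ := Real.pi_pos
  have hn0 : (n:ℝ) ≠ 0 := by
    have : (4:ℝ) ≤ n := by exact_mod_cast hn
    linarith
  have hNpos : (0:ℤ) < (n:ℤ) := by exact_mod_cast (by omega : 0 < n)
  have hNe : (n:ℤ) = 2 * (m:ℤ) := by exact_mod_cast hm
  set N : ℤ := (n:ℤ) with hN
  set s : ℤ := (2*k - 1) % (2*N) with hs
  have h2N : (0:ℤ) < 2*N := by linarith
  have hs0 : 0 ≤ s := Int.emod_nonneg _ (by omega)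
  have hslt : s < 2*N := Int.emod_lt_of_pos _ h2N
  have hsodd : s % 2 = 1 := by
    rw [hs, Int.emod_emod_of_dvd _ ⟨N, by ring⟩]
    omega
  have hkey : Real.cos ((2*(k:ℝ) - 1) * π / n) = Real.cos ((s:ℝ) * π / n) := by
    have hq : (2*k - 1 : ℤ) = s + 2*N*((2*k - 1)/(2*N)) := by
      rw [hs]; exact (Int.emod_add_mul_ediv _ _).symm
    have hang : (2*(k:ℝ) - 1) * π / n = (s:ℝ)*π/n + ((2*k - 1)/(2*N) : ℤ) * (2*π) := by
      have hcast : (2*(k:ℝ) - 1) = (s:ℝ) + 2*(N:ℝ)*(((2*k - 1)/(2*N) : ℤ):ℝ) := by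
        exact_mod_cast congrArg (Int.cast : ℤ → ℝ) hq
      rw [hcast, hN]
      push_cast
      field_simp
    rw [hang, Real.cos_add_int_mul_two_pi]
  rw [hkey]
  rcases le_or_gt s N with hsN | hsN
  · exact abs_cos_aux n hn s (by omega) (by omega)
  · have hco : Real.cos ((s:ℝ)*π/n) = Real.cos (((2*N - s : ℤ):ℝ)*π/n) := by
      have : ((2*N - s : ℤ):ℝ)*π/n = 2*π - (s:ℝ)*π/n := by
        push_cast [hN]
        field_simp
      rw [this, Real.cos_sub, Real.cos_two_pi, Real.sin_two_pi]
      ring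
    rw [hco]
    exact abs_cos_aux n hn (2*N - s) (by omega) (by omega)

end Stmt8Aux

open Stmt8Aux

/-- For even `n ≥ 4`: every state on the segment `[ω_{i−1}^n, ω_i^n]` is perfectly
distinguishable from every state on `[ω_{i+n/2−1}^n, ω_{i+n/2}^n]`, and the
measurement `{e_i^n, u − e_i^n}` distinguishes them. -/
theorem stmt8 (n : ℕ) (hn : 4 ≤ n) (m : ℕ) (hm : n = 2 * m) (i : ℤ)
    (σ τ : V3) (hσ : σ ∈ segment ℝ (pur n (i - 1)) (pur n i))
    (hτ : τ ∈ segment ℝ (pur n (i + m - 1)) (pur n (i + m))) :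
    effE n i σ = 1 ∧ effE n i τ = 0 ∧
    IsEffect (Omega n) (effE n i) ∧ IsEffect (Omega n) (uEff - effE n i) ∧
    PerfDist (Omega n) ![σ, τ] := by
  have hc := cos_pos_of n hn
  have hc0 : Real.cos (π / n) ≠ 0 := ne_of_gt hc
  have hπ := Real.pi_pos
  have hn4 : (4:ℝ) ≤ n := by exact_mod_cast hn
  have hn0 : (n:ℝ) ≠ 0 := by linarith
  have hm2 : (n:ℝ) = 2 * m := by exact_mod_cast hm
  have hm0 : (m:ℝ) ≠ 0 := by
    intro h; rw [h] at hm2; norm_num at hm2; exact hn0 (by exact_mod_cast hm2)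
  -- values on the four pure states
  have vi : effE n i (pur n i) = 1 := by
    rw [effE_pur n hn i i, show (2 * ((i:ℝ) - (i:ℝ)) - 1) * π / n = -(π/n) by ring,
      Real.cos_neg]
    field_simp
    norm_num
  have vi1 : effE n i (pur n (i - 1)) = 1 := by
    rw [effE_pur n hn i (i-1), show (2 * ((i:ℝ) - ((i - 1 : ℤ):ℝ)) - 1) * π / n = π/n by
      push_cast; ring]
    field_simp
    norm_num
  have vt : effE n i (pur n (i + m)) = 0 := by
    have hang : (2 * ((i:ℝ) - ((i + m : ℤ):ℝ)) - 1) * π / n = -(π + π/n) := by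
      push_cast
      rw [hm2]
      field_simp
      ring
    rw [effE_pur n hn i (i + m), hang, Real.cos_neg, show π + π/n = π/n + π by ring,
      Real.cos_add_pi]
    field_simp
    norm_num
  have vt1 : effE n i (pur n (i + m - 1)) = 0 := by
    have hang : (2 * ((i:ℝ) - ((i + m - 1 : ℤ):ℝ)) - 1) * π / n = π/n - π := by
      push_cast
      rw [hm2]
      field_simp
      ring
    rw [effE_pur n hn i (i + m - 1), hang, Real.cos_sub_pi]
    field_simp
    norm_num
  -- values on σ and τ
  obtain ⟨a, b, ha, hb, hab, hσe⟩ := hσ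
  obtain ⟨a', b', ha', hb', hab', hτe⟩ := hτ
  have hσ1 : effE n i σ = 1 := by
    rw [← hσe, map_add, map_smul, map_smul, smul_eq_mul, smul_eq_mul, vi, vi1]
    linarith
  have hτ0 : effE n i τ = 0 := by
    rw [← hτe, map_add, map_smul, map_smul, smul_eq_mul, smul_eq_mul, vt, vt1]
    linarith
  have hupur : ∀ j : ℤ, uEff (pur n j) = 1 := by
    intro j
    simp [uEff, pur]
  have huσ : uEff σ = 1 := by
    rw [← hσe, map_add, map_smul, map_smul, smul_eq_mul, smul_eq_mul, hupur, hupur]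
    linarith
  have huτ : uEff τ = 1 := by
    rw [← hτe, map_add, map_smul, map_smul, smul_eq_mul, smul_eq_mul, hupur, hupur]
    linarith
  -- effE is an effect
  have heff : IsEffect (Omega n) (effE n i) := by
    intro ω hω
    have hsub : Omega n ⊆ (effE n i) ⁻¹' (Set.Icc 0 1) := by
      apply convexHull_min _ ((convex_Icc (0:ℝ) 1).linear_preimage _)
      rintro x ⟨j, rfl⟩
      have hb := key_bound n m hn hm (i - (j:ℤ))
      rw [show ((2 * ((i - (j:ℤ) : ℤ):ℝ) - 1)) = 2 * ((i:ℝ) - ((j:ℤ):ℝ)) - 1 by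
        push_cast; ring] at hb
      rw [abs_le] at hb
      have h1 : -1 ≤ Real.cos ((2 * ((i:ℝ) - ((j:ℤ):ℝ)) - 1) * π / n) / Real.cos (π/n) := by
        rw [neg_le, ← neg_div, div_le_one hc]
        linarith [hb.1]
      have h2 : Real.cos ((2 * ((i:ℝ) - ((j:ℤ):ℝ)) - 1) * π / n) / Real.cos (π/n) ≤ 1 :=
        (div_le_one hc).mpr hb.2
      simp only [Set.mem_preimage, Set.mem_Icc]
      rw [effE_pur n hn i (j:ℤ)]
      constructor <;> linarith
    exact (hsub hω : _)
  -- uEff = 1 on Omega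
  have huO : ∀ ω ∈ Omega n, uEff ω = 1 := by
    intro ω hω
    have hsub : Omega n ⊆ uEff ⁻¹' ({1} : Set ℝ) := by
      apply convexHull_min _ ((convex_singleton (1:ℝ)).linear_preimage _)
      rintro x ⟨j, rfl⟩
      exact hupur (j:ℤ)
    exact hsub hω
  have heff2 : IsEffect (Omega n) (uEff - effE n i) := by
    intro ω hω
    have h1 := heff ω hω
    have h2 := huO ω hω
    rw [LinearMap.sub_apply, h2]
    constructor <;> linarith [h1.1, h1.2]
  refine ⟨hσ1, hτ0, heff, heff2, ?_⟩
  refine ⟨![effE n i, uEff - effE n i], ?_, ?_, ?_⟩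
  · intro k
    fin_cases k
    · simpa using heff
    · simpa using heff2
  · rw [Fin.sum_univ_two]
    simp only [Matrix.cons_val_zero, Matrix.cons_val_one, Matrix.head_cons]
    abel
  · intro a b
    fin_cases a <;> fin_cases b <;>
      simp [LinearMap.sub_apply, hσ1, hτ0, huσ, huτ]
end
end

section
/- Let n ≥ 3 be an odd integer and let i be any index (mod n). The pure state ω_i^n is perfectly distinguishable from every state σ on the segment [ω_{i+(n−1)/2}^n, ω_{i+(n+1)/2}^n]; the measurement {e_i^n, u − e_i^n} distinguishes them. -/
open Real

noncomputable section

lemma dotL_apply' (v x : V3) : dotL v x = v 0 * x 0 + v 1 * x 1 + v 2 * x 2 := by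
  simp [dotL, Fin.sum_univ_three]

lemma cosp (n : ℕ) (hn : 3 ≤ n) : 0 < Real.cos (π / n) := by
  have hn0 : (0:ℝ) < n := by exact_mod_cast Nat.lt_of_lt_of_le (by norm_num) hn
  apply Real.cos_pos_of_mem_Ioo
  constructor
  · have := Real.pi_pos
    have : 0 < π / n := by positivity
    linarith [Real.pi_pos]
  · have h2 : (2:ℝ) < n := by exact_mod_cast Nat.lt_of_lt_of_le (by norm_num) hn
    calc π / n < π / 2 := by
          apply div_lt_div_of_pos_left Real.pi_pos (by norm_num) h2
      _ ≤ π / 2 := le_refl _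

lemma rn_sq (n : ℕ) (hn : 3 ≤ n) : rn n ^ 2 = 1 / Real.cos (π / n) := by
  have := cosp n hn
  exact Real.sq_sqrt (by positivity)

lemma effO_pur (n : ℕ) (hn : 3 ≤ n) (i j : ℤ) :
    effO n i (pur n j) = (1 + rn n ^ 2 * Real.cos (2*π*((i:ℝ)-j)/n)) / (1 + rn n ^ 2) := by
  have h := Real.cos_sub (2*(i:ℝ)*π/n) (2*π*(j:ℝ)/n)
  have he : 2*(i:ℝ)*π/n - 2*π*(j:ℝ)/n = 2*π*((i:ℝ)-j)/n := by ring
  rw [he] at h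
  have hd : (0:ℝ) < 1 + rn n ^ 2 := by positivity
  simp only [effO, dotL_apply', pur, Pi.smul_apply, Matrix.cons_val_zero,
    Matrix.cons_val_one, Matrix.head_cons, Matrix.cons_val_two, Matrix.tail_cons,
    smul_eq_mul]
  field_simp
  linear_combination -(rn n)^2 * h

lemma cos_lb (n : ℕ) (hn : 3 ≤ n) (m : ℕ) (hm : n = 2*m+1) (k : ℤ) :
    -Real.cos (π/n) ≤ Real.cos (2*π*(k:ℝ)/n) := by
  have hn0 : (0:ℝ) < n := by exact_mod_cast Nat.lt_of_lt_of_le (by norm_num) hn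
  have hnz : (n:ℤ) ≠ 0 := by omega
  set k' : ℤ := k % n with hk'def
  have h0 : 0 ≤ k' := Int.emod_nonneg k hnz
  have h1 : k' < n := Int.emod_lt_of_pos k (by omega)
  have hper : Real.cos (2*π*(k:ℝ)/n) = Real.cos (2*π*(k':ℝ)/n) := by
    have hk : (k:ℝ) = (k':ℝ) + (n:ℝ) * ((k / n : ℤ):ℝ) := by
      exact_mod_cast (Int.emod_add_mul_ediv k n).symm
    have harg : 2*π*(k:ℝ)/n = 2*π*(k':ℝ)/n + ((k / n : ℤ):ℝ) * (2*π) := by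
      rw [hk]; field_simp
    rw [harg, Real.cos_add_int_mul_two_pi]
  rw [hper]
  set d : ℤ := |2*k' - (n:ℤ)| with hddef
  have hd1 : 1 ≤ d := by
    rcases abs_cases (2*k' - (n:ℤ)) with ⟨he, _⟩ | ⟨he, _⟩ <;> omega
  have hdn : d ≤ n := by
    rcases abs_cases (2*k' - (n:ℤ)) with ⟨he, _⟩ | ⟨he, _⟩ <;> omega
  have habs : |2*π*(k':ℝ)/n - π| = π * (d:ℝ) / n := by
    have : 2*π*(k':ℝ)/n - π = π * ((2*k' - (n:ℤ) : ℤ):ℝ) / n := by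
      push_cast; field_simp
    rw [this, abs_div, abs_mul, abs_of_pos Real.pi_pos, abs_of_pos hn0, ← Int.cast_abs, ← hddef]
  have hd1' : (1:ℝ) ≤ (d:ℝ) := by exact_mod_cast hd1
  have hdn' : (d:ℝ) ≤ (n:ℝ) := by exact_mod_cast hdn
  have hle : Real.cos (π * (d:ℝ) / n) ≤ Real.cos (π / n) := by
    apply Real.cos_le_cos_of_nonneg_of_le_pi
    · positivity
    · rw [div_le_iff₀ hn0]; nlinarith [Real.pi_pos]
    · rw [div_le_div_iff₀ hn0 hn0]; nlinarith [mul_pos Real.pi_pos hn0]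
  have hcos : Real.cos (2*π*(k':ℝ)/n) = -Real.cos (π * (d:ℝ) / n) := by
    have h2 : Real.cos (2*π*(k':ℝ)/n - π) = -Real.cos (2*π*(k':ℝ)/n) :=
      Real.cos_sub_pi _
    have h3 : Real.cos |2*π*(k':ℝ)/n - π| = Real.cos (2*π*(k':ℝ)/n - π) :=
      Real.cos_abs _
    rw [habs] at h3
    linarith [h3, h2]
  rw [hcos]
  linarith [hle]

lemma effO_endpoint (n : ℕ) (hn : 3 ≤ n) (m : ℕ) (hm : n = 2*m+1) (i j : ℤ)
    (hj : j = i + m ∨ j = i + m + 1) : effO n i (pur n j) = 0 := by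
  have hn0 : (0:ℝ) < n := by exact_mod_cast Nat.lt_of_lt_of_le (by norm_num) hn
  have hnm : (n:ℝ) = 2*(m:ℝ)+1 := by exact_mod_cast hm
  have hc := cosp n hn
  have hr := rn_sq n hn
  rw [effO_pur n hn i j]
  have hcos : Real.cos (2*π*((i:ℝ)-(j:ℝ))/n) = -Real.cos (π/n) := by
    rcases hj with rfl | rfl
    · have harg : 2*π*((i:ℝ)-((i:ℤ)+(m:ℤ) : ℤ))/n = -(π - π/n) := by
        push_cast
        field_simp
        linear_combination hnm
      rw [harg, Real.cos_neg, Real.cos_pi_sub]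
    · have harg : 2*π*((i:ℝ)-((i:ℤ)+(m:ℤ)+1 : ℤ))/n = -(π/n + π) := by
        push_cast
        field_simp
        linear_combination hnm
      rw [harg, Real.cos_neg, Real.cos_add_pi]
  rw [hcos, hr]
  field_simp
  ring

lemma effO_bounds (n : ℕ) (hn : 3 ≤ n) (m : ℕ) (hm : n = 2*m+1) (i : ℤ) :
    ∀ ω ∈ Omega n, 0 ≤ effO n i ω ∧ effO n i ω ≤ 1 := by
  intro ω hω
  have key : Omega n ⊆ (effO n i) ⁻¹' Set.Icc (0:ℝ) 1 := by
    apply convexHull_min _ ((convex_Icc (0:ℝ) 1).linear_preimage (effO n i))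
    rintro x ⟨j, rfl⟩
    have hd : (0:ℝ) < 1 + rn n ^ 2 := by positivity
    have hc := cosp n hn
    have hr := rn_sq n hn
    have hcb := cos_lb n hn m hm (i - (j:ℤ))
    push_cast at hcb
    have hcu := Real.cos_le_one (2*π*((i:ℝ)-((j:ℤ):ℝ))/n)
    rw [Set.mem_preimage, Set.mem_Icc, effO_pur n hn]
    have h1 : rn n ^ 2 * Real.cos (π/n) = 1 := by rw [hr]; field_simp
    constructor
    · apply div_nonneg _ hd.le
      have h2 : rn n ^ 2 * (-Real.cos (π/n)) ≤ rn n ^ 2 * Real.cos (2*π*((i:ℝ)-((j:ℤ):ℝ))/n) :=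
        mul_le_mul_of_nonneg_left hcb (by positivity)
      nlinarith
    · rw [div_le_one hd]
      nlinarith [sq_nonneg (rn n)]
  exact key hω

lemma uEff_pur (n : ℕ) (j : ℤ) : uEff (pur n j) = 1 := by
  simp [uEff, pur]

/-- For odd `n ≥ 3`: `ω_i^n` is perfectly distinguishable from every state on the
segment `[ω_{i+(n−1)/2}^n, ω_{i+(n+1)/2}^n]`, and the measurement
`{e_i^n, u − e_i^n}` distinguishes them. -/
theorem stmt9 (n : ℕ) (hn : 3 ≤ n) (m : ℕ) (hm : n = 2 * m + 1) (i : ℤ)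
    (σ : V3) (hσ : σ ∈ segment ℝ (pur n (i + m)) (pur n (i + m + 1))) :
    effO n i (pur n i) = 1 ∧ effO n i σ = 0 ∧
    IsEffect (Omega n) (effO n i) ∧ IsEffect (Omega n) (uEff - effO n i) ∧
    PerfDist (Omega n) ![pur n i, σ] := by
  have hd : (0:ℝ) < 1 + rn n ^ 2 := by positivity
  have h1 : effO n i (pur n i) = 1 := by
    rw [effO_pur n hn i i]
    simp [div_self hd.ne']
  obtain ⟨a, b, ha, hb, hab, hs⟩ := hσ
  have e1 : effO n i (pur n (i + m)) = 0 := effO_endpoint n hn m hm i _ (Or.inl rfl)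
  have e2 : effO n i (pur n (i + m + 1)) = 0 := effO_endpoint n hn m hm i _ (Or.inr rfl)
  have hσ0 : effO n i σ = 0 := by
    rw [← hs]; simp [map_add, map_smul, e1, e2]
  have hσu : uEff σ = 1 := by
    rw [← hs]; simp [map_add, map_smul, uEff_pur, hab]
  have hE1 : IsEffect (Omega n) (effO n i) := effO_bounds n hn m hm i
  have hE2 : IsEffect (Omega n) (uEff - effO n i) := by
    intro ω hω
    obtain ⟨h0, h1'⟩ := hE1 ω hω
    have hu : uEff ω = 1 := by
      have key : Omega n ⊆ uEff ⁻¹' {(1:ℝ)} := by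
        apply convexHull_min _ ((convex_singleton (1:ℝ)).linear_preimage uEff)
        rintro x ⟨j, rfl⟩
        simp [uEff_pur]
      exact key hω
    simp only [LinearMap.sub_apply, hu]
    constructor <;> linarith
  refine ⟨h1, hσ0, hE1, hE2, ?_⟩
  refine ⟨![effO n i, uEff - effO n i], ?_, ?_, ?_⟩
  · intro k; fin_cases k
    · exact hE1
    · exact hE2
  · simp [Fin.sum_univ_two]
  · intro k j
    fin_cases k <;> fin_cases j <;>
      simp [Matrix.cons_val_zero, Matrix.cons_val_one, Matrix.head_cons,
        LinearMap.sub_apply, h1, hσ0, hσu, uEff_pur]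
end
end

section
/- Let n ≥ 6 be an even integer and let i be any index (mod n). If λ, μ ∈ [0,1] satisfy (1−λ) ω_i^n + λ ω_{i+n/2}^n = (1−μ) ω_{i+1}^n + μ ω_{i+n/2+2}^n, then μ = λ / (λ + c²(1−λ)), where c = cos(2π/n)/cos(π/n). -/
open Real

noncomputable section

/-!
Write `a = 2πi/n` and `t = 2π/n`. Since `ω_{i+n/2}` is antipodal to `ω_i`, the first two
coordinates of the hypothesis say `(1 - 2λ) e^{ia} = (1 - μ) e^{i(a+t)} - μ e^{i(a+2t)}`.
Rotating by `-a`, the imaginary part gives `μ (1 + 2 cos t) = 1` and the real part then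
`λ = μ cos t`; with `cos² (π/n) = (1 + cos t)/2` the denominator `λ + c² (1 - λ)` equals `cos t`.
-/

lemma eq_cos_sin_of_rotate {a s t p q r : ℝ}
    (hcos : p * cos a = q * cos (a + s) + r * cos (a + t))
    (hsin : p * sin a = q * sin (a + s) + r * sin (a + t)) :
    p = q * cos s + r * cos t ∧ 0 = q * sin s + r * sin t := by
  simp only [cos_add, sin_add] at hcos hsin
  have ha := sin_sq_add_cos_sq a
  constructor
  · linear_combination cos a * hcos + sin a * hsin - (p - q * cos s - r * cos t) * ha
  · linear_combination cos a * hsin - sin a * hcos + (q * sin s + r * sin t) * ha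

lemma two_pi_div_lt_pi_div_two {n : ℕ} (hn : 4 < n) : 2 * π / n < π / 2 := by
  have hn' : (4 : ℝ) < n := by exact_mod_cast hn
  rw [div_lt_div_iff₀ (by linarith) two_pos]
  nlinarith [pi_pos]

lemma rn_pos {n : ℕ} (hn : 2 < n) : 0 < rn n := by
  have hn' : (2 : ℝ) < n := by exact_mod_cast hn
  have hlt : π / n < π / 2 := div_lt_div_of_pos_left pi_pos two_pos hn'
  have hpos : 0 < π / n := div_pos pi_pos (by linarith)
  exact sqrt_pos.mpr (one_div_pos.mpr (cos_pos_of_mem_Ioo ⟨by linarith, hlt⟩))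

lemma two_pi_mul_add_div {n : ℕ} (hn : n ≠ 0) (x k : ℝ) :
    2 * π * (x + k) / n = 2 * π * x / n + k * (2 * π / n) := by
  field_simp

lemma pur_chord_coords {n m : ℕ} (hm : n = 2 * m) (hn : n ≠ 0) (hr : rn n ≠ 0) {i : ℤ}
    {lam mu : ℝ}
    (heq : (1 - lam) • pur n i + lam • pur n (i + m)
         = (1 - mu) • pur n (i + 1) + mu • pur n (i + m + 2)) :
    (1 - 2 * lam) * cos (2 * π * i / n)
        = (1 - mu) * cos (2 * π * i / n + 2 * π / n)
          + -mu * cos (2 * π * i / n + 2 * (2 * π / n)) ∧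
      (1 - 2 * lam) * sin (2 * π * i / n)
        = (1 - mu) * sin (2 * π * i / n + 2 * π / n)
          + -mu * sin (2 * π * i / n + 2 * (2 * π / n)) := by
  have half_turn : (m : ℝ) * (2 * π / n) = π := by
    rw [hm, Nat.cast_mul, Nat.cast_two]
    field_simp [show (m : ℝ) ≠ 0 by rintro h; simp_all]
  have h0 := congrFun heq 0
  have h1 := congrFun heq 1
  simp only [pur, Pi.add_apply, Pi.smul_apply, smul_eq_mul, Matrix.cons_val_zero,
    Matrix.cons_val_one, Int.cast_add, Int.cast_natCast, Int.cast_one,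
    Int.cast_ofNat, two_pi_mul_add_div hn, add_assoc, add_mul, half_turn, one_mul] at h0 h1
  rw [← add_assoc, add_right_comm _ π, cos_add_pi, cos_add_pi] at h0
  rw [← add_assoc, add_right_comm _ π, sin_add_pi, sin_add_pi] at h1
  constructor
  · exact mul_left_cancel₀ hr (by linear_combination h0)
  · exact mul_left_cancel₀ hr (by linear_combination h1)

lemma weights_of_chord {t lam mu : ℝ} (ht : sin t ≠ 0)
    (hre : 1 - 2 * lam = (1 - mu) * cos t + -mu * cos (2 * t))
    (him : 0 = (1 - mu) * sin t + -mu * sin (2 * t)) :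
    mu * (1 + 2 * cos t) = 1 ∧ lam = mu * cos t := by
  rw [sin_two_mul] at him
  rw [cos_two_mul] at hre
  have hmu : mu * (1 + 2 * cos t) = 1 :=
    (mul_right_inj' ht).mp (by linear_combination him)
  exact ⟨hmu, by linear_combination (-1 / 2 : ℝ) * hre + (cos t - 1) / 2 * hmu⟩

lemma weight_eq_div {c lam mu : ℝ} (hc : 0 < c) (hmu : mu * (1 + 2 * c) = 1)
    (hlam : lam = mu * c) :
    mu = lam / (lam + c ^ 2 / (1 / 2 + c / 2) * (1 - lam)) := by
  have hden : lam + c ^ 2 / (1 / 2 + c / 2) * (1 - lam) = c := by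
    field_simp
    linear_combination (1 + c - 2 * c ^ 2) * hlam + c * (1 - c) * hmu
  rw [hden, hlam, mul_div_cancel_right₀ _ hc.ne']

theorem stmt10_general (n : ℕ) (hn : 6 ≤ n) (m : ℕ) (hm : n = 2 * m) (i : ℤ)
    (lam mu : ℝ)
    (heq : (1 - lam) • pur n i + lam • pur n (i + m)
         = (1 - mu) • pur n (i + 1) + mu • pur n (i + m + 2)) :
    mu = lam / (lam + (Real.cos (2*π/n) / Real.cos (π/n))^2 * (1 - lam)) := by
  have ht := two_pi_div_lt_pi_div_two (n := n) (by omega)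
  have ht₀ : 0 < 2 * π / n := by positivity
  obtain ⟨hcos, hsin⟩ :=
    pur_chord_coords hm (by omega) (rn_pos (by omega)).ne' heq
  obtain ⟨hre, him⟩ := eq_cos_sin_of_rotate hcos hsin
  obtain ⟨hmu, hlam⟩ :=
    weights_of_chord (sin_pos_of_pos_of_lt_pi ht₀ (by linarith [pi_pos])).ne' hre him
  rw [div_pow, cos_sq (π / n), ← mul_div_assoc]
  exact weight_eq_div (cos_pos_of_mem_Ioo ⟨by linarith, ht⟩) hmu hlam

/-- For even `n ≥ 6`: if `(1−λ) ω_i + λ ω_{i+n/2} = (1−μ) ω_{i+1} + μ ω_{i+n/2+2}`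
with `λ, μ ∈ [0,1]`, then `μ = λ / (λ + c² (1−λ))` where `c = cos(2π/n)/cos(π/n)`. -/
theorem stmt10 (n : ℕ) (hn : 6 ≤ n) (m : ℕ) (hm : n = 2 * m) (i : ℤ)
    (lam mu : ℝ) (hlam : lam ∈ Set.Icc (0:ℝ) 1) (hmu : mu ∈ Set.Icc (0:ℝ) 1)
    (heq : (1 - lam) • pur n i + lam • pur n (i + m)
         = (1 - mu) • pur n (i + 1) + mu • pur n (i + m + 2)) :
    mu = lam / (lam + (Real.cos (2*π/n) / Real.cos (π/n))^2 * (1 - lam)) :=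
  stmt10_general n hn m hm i lam mu heq
end
end

section
/- Let n ≥ 5 be an odd integer, let i be any index (mod n), set c = cos(π/n) and ω_A = ½(ω_{i+(n−1)/2}^n + ω_{i+(n+1)/2}^n). Then the following vector identity holds in ℝ³: (1/(2c+1)) ω_{i+1}^n + (2c/(2c+1)) ω_{i+(n+1)/2}^n = ((2c−1)/(2c+1)) ω_i^n + (2/(2c+1)) ω_A. (Equivalently, the segments [ω_i^n, ω_A] and [ω_{i+1}^n, ω_{i+(n+1)/2}^n] intersect at the point ω_Q with these convex coefficients.) -/
open Real

noncomputable section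

/-- For odd `n ≥ 5`, with `c = cos(π/n)` and `ω_A = ½(ω_{i+(n−1)/2} + ω_{i+(n+1)/2})`:
`(1/(2c+1)) ω_{i+1} + (2c/(2c+1)) ω_{i+(n+1)/2} = ((2c−1)/(2c+1)) ω_i + (2/(2c+1)) ω_A`. -/
theorem stmt11 (n : ℕ) (hn : 5 ≤ n) (m : ℕ) (hm : n = 2 * m + 1) (i : ℤ) :
    (1/(2 * Real.cos (π/n) + 1)) • pur n (i + 1)
      + (2 * Real.cos (π/n)/(2 * Real.cos (π/n) + 1)) • pur n (i + m + 1)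
    = ((2 * Real.cos (π/n) - 1)/(2 * Real.cos (π/n) + 1)) • pur n i
      + (2/(2 * Real.cos (π/n) + 1)) •
          ((1/2 : ℝ) • (pur n (i + m) + pur n (i + m + 1))) := by
  have hn0 : (0:ℝ) < n := by exact_mod_cast Nat.lt_of_lt_of_le (by norm_num) hn
  have hc : 0 < Real.cos (π/n) := by
    apply Real.cos_pos_of_mem_Ioo
    constructor
    · have : 0 < π / n := by positivity
      linarith [Real.pi_pos]
    · have : π / n ≤ π / 5 := by
        apply div_le_div_of_nonneg_left Real.pi_pos.le (by norm_num)
        exact_mod_cast hn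
      linarith [Real.pi_pos]
  have hden : 2 * Real.cos (π/n) + 1 ≠ 0 := by positivity
  have hnm : (n:ℝ) = 2*m+1 := by exact_mod_cast congrArg (Nat.cast : ℕ → ℝ) hm
  have h1 : 2*π*((i:ℝ)+1)/n = 2*π*i/n + 2*(π/n) := by field_simp
  have h2 : 2*π*((i:ℝ)+m)/n = (2*π*i/n - π/n) + π := by
    field_simp; rw [hnm]; ring
  have h3 : 2*π*((i:ℝ)+m+1)/n = (2*π*i/n + π/n) + π := by
    field_simp; rw [hnm]; ring
  funext x
  fin_cases x <;>
    simp only [pur, Pi.add_apply, Pi.smul_apply, smul_eq_mul, Int.cast_add,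
      Int.cast_one, Int.cast_natCast, Matrix.cons_val_zero, Matrix.cons_val_one,
      Matrix.head_cons, Matrix.cons_val_two, Fin.zero_eta, Fin.mk_one, Fin.reduceFinMk, Fin.isValue, Matrix.tail_cons, h1, h2, h3,
      Real.cos_add, Real.sin_add, Real.cos_pi, Real.sin_pi, Real.cos_sub, Real.sin_sub, Real.cos_two_mul, Real.sin_two_mul]
  · field_simp
    ring
  · field_simp
    ring
  · field_simp
    ring
end
end

section
/- Let n ≥ 5 be an odd integer, let i be any index (mod n), set α = sin(π/(2n)) and ω_A = ½(ω_{i+(n−1)/2}^n + ω_{i+(n+1)/2}^n). If n ≡ 3 (mod 4), set j = (n+1)/4 and the sign to minus; if n ≡ 1 (mod 4), set j = (n−1)/4 and the sign to plus. Then ½(ω_{i+j}^n + ω_{i+(n−j)}^n) = (1/(2∓2α)) ω_A + ((1∓2α)/(2∓2α)) ω_i^n (upper signs for n ≡ 3, lower signs for n ≡ 1 mod 4). -/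
open Real

noncomputable section

/-! Write `ω_m = r_n (cos φ_m, sin φ_m, 0) + (0, 0, 1)` with `φ_m = 2πm/n`. Two pure states whose
indices sum to `2i + n` have mean angle `φ_i + π`, so their midpoint is
`-r_n cos(half-angle) (cos φ_i, sin φ_i, 0) + (0, 0, 1)`: both `½(ω_{i+j} + ω_{i+n-j})` and `ω_A`
lie on the line through `ω_i` and `(0, 0, 1)`. Comparing coefficients along that line, the claim
reduces to `cos(π/n) = 1 - 2 sin²(π/(2n))` together with `cos(π(n-2j)/n) = ±sin(π/(2n))`, which
holds because `n - 2j = (n ∓ 1)/2`. -/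

def planeDir (θ : ℝ) : V3 := ![cos θ, sin θ, 0]

def unitZ : V3 := ![0, 0, 1]

lemma pur_eq_smul_planeDir_add_unitZ (n : ℕ) (m : ℤ) :
    pur n m = rn n • planeDir (2 * π * m / n) + unitZ := by
  ext j
  fin_cases j <;> simp [pur, planeDir, unitZ]

lemma planeDir_add_planeDir (x y : ℝ) :
    planeDir x + planeDir y = (2 * cos ((x - y) / 2)) • planeDir ((x + y) / 2) := by
  simp only [planeDir, Matrix.cons_add_cons, Matrix.smul_cons, Matrix.empty_add_empty,
    Matrix.smul_empty, cos_add_cos, sin_add_sin, smul_eq_mul, add_zero, mul_zero]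
  ring_nf

lemma planeDir_add_pi (x : ℝ) : planeDir (x + π) = -planeDir x := by
  simp [planeDir, cos_add_pi, sin_add_pi]

lemma half_smul_pur_add_pur_of_add_eq {n : ℕ} (hn : n ≠ 0) (i a b : ℤ) (hab : a + b = n) :
    (1/2 : ℝ) • (pur n (i + a) + pur n (i + b))
      = (-(rn n * cos (π * (b - a) / n))) • planeDir (2 * π * i / n) + unitZ := by
  have hn' : (n : ℝ) ≠ 0 := Nat.cast_ne_zero.mpr hn
  have hab' : (a : ℝ) + b = n := by exact_mod_cast hab
  have hmid : (2 * π * ((i + a : ℤ) : ℝ) / n + 2 * π * ((i + b : ℤ) : ℝ) / n) / 2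
      = 2 * π * i / n + π := by
    push_cast
    field_simp
    linarith
  have hhalf : (2 * π * ((i + a : ℤ) : ℝ) / n - 2 * π * ((i + b : ℤ) : ℝ) / n) / 2
      = -(π * (b - a) / n) := by
    push_cast
    ring
  rw [pur_eq_smul_planeDir_add_unitZ, pur_eq_smul_planeDir_add_unitZ]
  calc _ = (rn n / 2) • (planeDir (2 * π * ((i + a : ℤ) : ℝ) / n)
              + planeDir (2 * π * ((i + b : ℤ) : ℝ) / n)) + unitZ := by module
    _ = _ := by
      rw [planeDir_add_planeDir, hmid, hhalf, planeDir_add_pi, cos_neg]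
      module

lemma cos_pi_div_eq_one_sub_two_mul_sin_sq (x : ℝ) :
    cos (π / x) = 1 - 2 * sin (π / (2 * x)) ^ 2 := by
  rw [← cos_two_mul_eq_one_sub]
  congr 1
  rcases eq_or_ne x 0 with rfl | hx
  · simp
  · field_simp

lemma cos_pi_mul_div_of_two_mul_add_one {n m : ℝ} (hn : n ≠ 0) (h : 2 * m + 1 = n) :
    cos (π * m / n) = sin (π / (2 * n)) := by
  rw [← cos_pi_div_two_sub]
  congr 1
  field_simp
  linarith

lemma cos_pi_mul_div_of_two_mul_sub_one {n m : ℝ} (hn : n ≠ 0) (h : 2 * m - 1 = n) :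
    cos (π * m / n) = -sin (π / (2 * n)) := by
  rw [← sin_neg, ← cos_pi_div_two_sub]
  congr 1
  field_simp
  linarith

lemma sin_pi_div_two_mul_lt_one {n : ℝ} (hn : 1 < n) : sin (π / (2 * n)) < 1 := by
  rw [← sin_pi_div_two]
  apply sin_lt_sin_of_lt_of_le_pi_div_two
  · have : 0 < π / (2 * n) := by positivity
    linarith [pi_pos]
  · exact le_rfl
  · rw [div_lt_div_iff_of_pos_left pi_pos (by positivity) two_pos]
    linarith

lemma sin_pi_div_two_mul_nonneg {n : ℝ} (hn : 1 ≤ n) : 0 ≤ sin (π / (2 * n)) := by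
  apply sin_nonneg_of_nonneg_of_le_pi (by positivity)
  rw [div_le_iff₀ (by positivity)]
  nlinarith [pi_pos]

lemma smul_add_mix_eq_smul_add (r t : ℝ) (v e : V3) (ht : 1 + t ≠ 0) :
    (1/(2 + 2 * t)) • ((-(r * (1 - 2 * t ^ 2))) • v + e) + ((1 + 2 * t)/(2 + 2 * t)) • (r • v + e)
      = (r * t) • v + e := by
  have h2 : 2 + 2 * t ≠ 0 := by contrapose! ht; linarith
  match_scalars <;> field_simp <;> ring

theorem half_smul_pur_add_pur_eq_mix {n : ℕ} (hn : n ≠ 0) (i a b c d : ℤ) (hab : a + b = n)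
    (hcd : c + d = n) (hdc : d - c = 1) {t : ℝ} (ht : cos (π * (b - a) / n) = -t)
    (hts : t ^ 2 = sin (π / (2 * n)) ^ 2) (h1 : 1 + t ≠ 0) :
    (1/2 : ℝ) • (pur n (i + a) + pur n (i + b))
      = (1/(2 + 2 * t)) • ((1/2 : ℝ) • (pur n (i + c) + pur n (i + d)))
        + ((1 + 2 * t)/(2 + 2 * t)) • pur n i := by
  have hdc' : ((d : ℝ) - c) = 1 := by exact_mod_cast hdc
  rw [half_smul_pur_add_pur_of_add_eq hn i a b hab, half_smul_pur_add_pur_of_add_eq hn i c d hcd,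
    hdc', mul_one, cos_pi_div_eq_one_sub_two_mul_sin_sq, ← hts, ht,
    pur_eq_smul_planeDir_add_unitZ, smul_add_mix_eq_smul_add _ _ _ _ h1]
  congr 2
  ring

theorem stmt12_general (n : ℕ) (i : ℤ) :
    (∀ k : ℕ, n = 4 * k + 3 →
      (1/2 : ℝ) • (pur n (i + (k+1)) + pur n (i + ((n : ℤ) - (k+1))))
        = (1/(2 - 2 * Real.sin (π/(2*n)))) •
            ((1/2 : ℝ) • (pur n (i + (2*k+1)) + pur n (i + (2*k+2))))
          + ((1 - 2 * Real.sin (π/(2*n)))/(2 - 2 * Real.sin (π/(2*n)))) • pur n i) ∧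
    (∀ k : ℕ, n = 4 * k + 1 →
      (1/2 : ℝ) • (pur n (i + k) + pur n (i + ((n : ℤ) - k)))
        = (1/(2 + 2 * Real.sin (π/(2*n)))) •
            ((1/2 : ℝ) • (pur n (i + (2*k)) + pur n (i + (2*k+1))))
          + ((1 + 2 * Real.sin (π/(2*n)))/(2 + 2 * Real.sin (π/(2*n)))) • pur n i) := by
  constructor
  · intro k hk
    have hkR : (n : ℝ) = 4 * k + 3 := by exact_mod_cast hk
    have hcos : cos (π * (((n - (k + 1) : ℤ) : ℝ) - ((k + 1 : ℤ) : ℝ)) / n)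
        = sin (π / (2 * n)) :=
      cos_pi_mul_div_of_two_mul_add_one (by rw [hkR]; positivity) (by push_cast; linarith)
    have hlt : sin (π / (2 * n)) < 1 := sin_pi_div_two_mul_lt_one (by rw [hkR]; linarith)
    have := half_smul_pur_add_pur_eq_mix (n := n) (t := -sin (π / (2 * n))) (by omega) i
      (k + 1) (n - (k + 1)) (2 * k + 1) (2 * k + 2) (by ring) (by push_cast [hk]; ring) (by ring)
      (by rw [neg_neg, hcos]) (by ring) (by linarith)
    simpa [← sub_eq_add_neg] using this
  · intro k hk
    have hkR : (n : ℝ) = 4 * k + 1 := by exact_mod_cast hk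
    have hcos : cos (π * (((n - k : ℤ) : ℝ) - ((k : ℤ) : ℝ)) / n) = -sin (π / (2 * n)) :=
      cos_pi_mul_div_of_two_mul_sub_one (by rw [hkR]; positivity) (by push_cast; linarith)
    have hnn : 0 ≤ sin (π / (2 * n)) := sin_pi_div_two_mul_nonneg (by rw [hkR]; linarith)
    exact half_smul_pur_add_pur_eq_mix (by omega) i k (n - k) (2 * k) (2 * k + 1)
      (by ring) (by push_cast [hk]; ring) (by ring) hcos rfl (by linarith)

/-- For odd `n ≥ 5`, with `α = sin(π/(2n))` and `ω_A = ½(ω_{i+(n−1)/2} + ω_{i+(n+1)/2})`: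
if `n = 4k+3` (so `j = (n+1)/4 = k+1`) then
`½(ω_{i+j} + ω_{i+(n−j)}) = (1/(2−2α)) ω_A + ((1−2α)/(2−2α)) ω_i`, and
if `n = 4k+1` (so `j = (n−1)/4 = k`) then
`½(ω_{i+j} + ω_{i+(n−j)}) = (1/(2+2α)) ω_A + ((1+2α)/(2+2α)) ω_i`. -/
theorem stmt12 (n : ℕ) (hn : 5 ≤ n) (i : ℤ) :
    (∀ k : ℕ, n = 4 * k + 3 →
      (1/2 : ℝ) • (pur n (i + (k+1)) + pur n (i + ((n : ℤ) - (k+1))))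
        = (1/(2 - 2 * Real.sin (π/(2*n)))) •
            ((1/2 : ℝ) • (pur n (i + (2*k+1)) + pur n (i + (2*k+2))))
          + ((1 - 2 * Real.sin (π/(2*n)))/(2 - 2 * Real.sin (π/(2*n)))) • pur n i) ∧
    (∀ k : ℕ, n = 4 * k + 1 →
      (1/2 : ℝ) • (pur n (i + k) + pur n (i + ((n : ℤ) - k)))
        = (1/(2 + 2 * Real.sin (π/(2*n)))) •
            ((1/2 : ℝ) • (pur n (i + (2*k)) + pur n (i + (2*k+1))))
          + ((1 + 2 * Real.sin (π/(2*n)))/(2 + 2 * Real.sin (π/(2*n)))) • pur n i) :=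
  stmt12_general n i
end
end

section
/- For every odd integer n ≥ 5, setting α = sin(π/(2n)), the two candidate values for the entropy of the state ω_A disagree: 2α² log 2 + ((1−4α²)/2) log(1−4α²) − (1−2α²) log(1−2α²) ≠ (1−2α) log(1−2α) − (2−2α) log(1−α) when n ≡ 3 (mod 4), and 2α² log 2 + ((1−4α²)/2) log(1−4α²) − (1−2α²) log(1−2α²) ≠ (1+2α) log(1+2α) − (2+2α) log(1+α) when n ≡ 1 (mod 4). -/
open Real

noncomputable section

lemma log_one_sub_le6 {x : ℝ} (h0 : 0 ≤ x) (h1 : x < 1) :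
    Real.log (1 - x) ≤ -(x + x^2/2 + x^3/3 + x^4/4 + x^5/5 + x^6/6) := by
  have hder : ∀ t ∈ Set.uIcc (0:ℝ) x,
      HasDerivAt (fun s : ℝ => -(s + s^2/2 + s^3/3 + s^4/4 + s^5/5 + s^6/6) - Real.log (1 - s))
        (t^6/(1-t)) t := by
    intro t ht
    rw [Set.uIcc_of_le h0] at ht
    have h1t : (0:ℝ) < 1 - t := by linarith [ht.2]
    have hlog : HasDerivAt (fun s : ℝ => Real.log (1 - s)) (-1/(1-t)) t := by
      have h := (((hasDerivAt_id t).const_sub (1:ℝ)).log h1t.ne')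
      simpa using h
    have hpoly : HasDerivAt (fun s : ℝ => -(s + s^2/2 + s^3/3 + s^4/4 + s^5/5 + s^6/6))
        (-(1 + t + t^2 + t^3 + t^4 + t^5)) t := by
      have h := ((((((hasDerivAt_id t).add ((hasDerivAt_pow 2 t).div_const 2)).add
        ((hasDerivAt_pow 3 t).div_const 3)).add ((hasDerivAt_pow 4 t).div_const 4)).add
        ((hasDerivAt_pow 5 t).div_const 5)).add ((hasDerivAt_pow 6 t).div_const 6)).neg
      refine h.congr_deriv ?_
      push_cast
      ring
    have h := hpoly.sub hlog
    refine h.congr_deriv ?_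
    field_simp
    ring
  have hcont : ContinuousOn (fun t : ℝ => t^6/(1-t)) (Set.uIcc 0 x) := by
    apply ContinuousOn.div (by fun_prop) (by fun_prop)
    intro t ht
    rw [Set.uIcc_of_le h0] at ht
    have := ht.2
    intro hc
    nlinarith [sub_eq_zero.mp hc]
  have hint := intervalIntegral.integral_eq_sub_of_hasDerivAt hder hcont.intervalIntegrable
  have hnn : 0 ≤ ∫ t in (0:ℝ)..x, t^6/(1-t) := by
    apply intervalIntegral.integral_nonneg h0
    intro t ht
    have h1t : (0:ℝ) < 1 - t := by linarith [ht.2]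
    positivity
  rw [hint] at hnn
  norm_num at hnn
  linarith
lemma log_one_sub_ge6 {x : ℝ} (h0 : 0 ≤ x) (h1 : x < 1) :
    -(x + x^2/2 + x^3/3 + x^4/4 + x^5/5 + x^6/6) - x^7/(7*(1-x)) ≤ Real.log (1 - x) := by
  have hder : ∀ t ∈ Set.uIcc (0:ℝ) x,
      HasDerivAt (fun s : ℝ =>
          Real.log (1 - s) + (s + s^2/2 + s^3/3 + s^4/4 + s^5/5 + s^6/6) + s^7/(7*(1-s)))
        (t^7/(7*(1-t)^2)) t := by
    intro t ht
    rw [Set.uIcc_of_le h0] at ht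
    have h1t : (0:ℝ) < 1 - t := by linarith [ht.2]
    have hlog : HasDerivAt (fun s : ℝ => Real.log (1 - s)) (-1/(1-t)) t := by
      have h := (((hasDerivAt_id t).const_sub (1:ℝ)).log h1t.ne')
      simpa using h
    have hpoly : HasDerivAt (fun s : ℝ => (s + s^2/2 + s^3/3 + s^4/4 + s^5/5 + s^6/6))
        (1 + t + t^2 + t^3 + t^4 + t^5) t := by
      have h := (((((hasDerivAt_id t).add ((hasDerivAt_pow 2 t).div_const 2)).add
        ((hasDerivAt_pow 3 t).div_const 3)).add ((hasDerivAt_pow 4 t).div_const 4)).add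
        ((hasDerivAt_pow 5 t).div_const 5)).add ((hasDerivAt_pow 6 t).div_const 6)
      refine h.congr_deriv ?_
      push_cast
      ring
    have hden : HasDerivAt (fun s : ℝ => 7*(1-s)) (-7) t := by
      have h := (((hasDerivAt_id t).const_sub (1:ℝ)).const_mul (7:ℝ))
      simpa using h
    have hrem : HasDerivAt (fun s : ℝ => s^7/(7*(1-s)))
        ((7*t^6*(7*(1-t)) - t^7*(-7))/(7*(1-t))^2) t := by
      exact (hasDerivAt_pow 7 t).div hden (by positivity)
    have h := (hlog.add hpoly).add hrem
    refine h.congr_deriv ?_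
    field_simp
    ring
  have hcont : ContinuousOn (fun t : ℝ => t^7/(7*(1-t)^2)) (Set.uIcc 0 x) := by
    apply ContinuousOn.div (by fun_prop) (by fun_prop)
    intro t ht
    rw [Set.uIcc_of_le h0] at ht
    have h1t : (0:ℝ) < 1 - t := by linarith [ht.2]
    exact ne_of_gt (by positivity)
  have hint := intervalIntegral.integral_eq_sub_of_hasDerivAt hder hcont.intervalIntegrable
  have hnn : 0 ≤ ∫ t in (0:ℝ)..x, t^7/(7*(1-t)^2) := by
    apply intervalIntegral.integral_nonneg h0
    intro t ht
    have h1t : (0:ℝ) < 1 - t := by linarith [ht.2]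
    exact div_nonneg (pow_nonneg ht.1 7) (by positivity)
  rw [hint] at hnn
  norm_num at hnn
  linarith

lemma log_one_add_le5 {x : ℝ} (h0 : 0 ≤ x) :
    Real.log (1 + x) ≤ x - x^2/2 + x^3/3 - x^4/4 + x^5/5 := by
  have hder : ∀ t ∈ Set.uIcc (0:ℝ) x,
      HasDerivAt (fun s : ℝ => (s - s^2/2 + s^3/3 - s^4/4 + s^5/5) - Real.log (1 + s))
        (t^5/(1+t)) t := by
    intro t ht
    rw [Set.uIcc_of_le h0] at ht
    have h1t : (0:ℝ) < 1 + t := by linarith [ht.1]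
    have hlog : HasDerivAt (fun s : ℝ => Real.log (1 + s)) (1/(1+t)) t := by
      have h := (((hasDerivAt_id t).const_add (1:ℝ)).log h1t.ne')
      simpa using h
    have hpoly : HasDerivAt (fun s : ℝ => (s - s^2/2 + s^3/3 - s^4/4 + s^5/5))
        (1 - t + t^2 - t^3 + t^4) t := by
      have h := ((((hasDerivAt_id t).sub ((hasDerivAt_pow 2 t).div_const 2)).add
        ((hasDerivAt_pow 3 t).div_const 3)).sub ((hasDerivAt_pow 4 t).div_const 4)).add
        ((hasDerivAt_pow 5 t).div_const 5)
      refine h.congr_deriv ?_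
      push_cast
      ring
    have h := hpoly.sub hlog
    refine h.congr_deriv ?_
    field_simp
    ring
  have hcont : ContinuousOn (fun t : ℝ => t^5/(1+t)) (Set.uIcc 0 x) := by
    apply ContinuousOn.div (by fun_prop) (by fun_prop)
    intro t ht
    rw [Set.uIcc_of_le h0] at ht
    have h1t : (0:ℝ) < 1 + t := by linarith [ht.1]
    exact ne_of_gt (by positivity)
  have hint := intervalIntegral.integral_eq_sub_of_hasDerivAt hder hcont.intervalIntegrable
  have hnn : 0 ≤ ∫ t in (0:ℝ)..x, t^5/(1+t) := by
    apply intervalIntegral.integral_nonneg h0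
    intro t ht
    have h1t : (0:ℝ) < 1 + t := by linarith [ht.1]
    exact div_nonneg (pow_nonneg ht.1 5) h1t.le
  rw [hint] at hnn
  norm_num at hnn
  linarith

lemma log_one_add_ge6 {x : ℝ} (h0 : 0 ≤ x) :
    x - x^2/2 + x^3/3 - x^4/4 + x^5/5 - x^6/6 ≤ Real.log (1 + x) := by
  have hder : ∀ t ∈ Set.uIcc (0:ℝ) x,
      HasDerivAt (fun s : ℝ => Real.log (1 + s) - (s - s^2/2 + s^3/3 - s^4/4 + s^5/5 - s^6/6))
        (t^6/(1+t)) t := by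
    intro t ht
    rw [Set.uIcc_of_le h0] at ht
    have h1t : (0:ℝ) < 1 + t := by linarith [ht.1]
    have hlog : HasDerivAt (fun s : ℝ => Real.log (1 + s)) (1/(1+t)) t := by
      have h := (((hasDerivAt_id t).const_add (1:ℝ)).log h1t.ne')
      simpa using h
    have hpoly : HasDerivAt (fun s : ℝ => (s - s^2/2 + s^3/3 - s^4/4 + s^5/5 - s^6/6))
        (1 - t + t^2 - t^3 + t^4 - t^5) t := by
      have h := (((((hasDerivAt_id t).sub ((hasDerivAt_pow 2 t).div_const 2)).add
        ((hasDerivAt_pow 3 t).div_const 3)).sub ((hasDerivAt_pow 4 t).div_const 4)).add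
        ((hasDerivAt_pow 5 t).div_const 5)).sub ((hasDerivAt_pow 6 t).div_const 6)
      refine h.congr_deriv ?_
      push_cast
      ring
    have h := hlog.sub hpoly
    refine h.congr_deriv ?_
    field_simp
    ring
  have hcont : ContinuousOn (fun t : ℝ => t^6/(1+t)) (Set.uIcc 0 x) := by
    apply ContinuousOn.div (by fun_prop) (by fun_prop)
    intro t ht
    rw [Set.uIcc_of_le h0] at ht
    have h1t : (0:ℝ) < 1 + t := by linarith [ht.1]
    exact ne_of_gt (by positivity)
  have hint := intervalIntegral.integral_eq_sub_of_hasDerivAt hder hcont.intervalIntegrable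
  have hnn : 0 ≤ ∫ t in (0:ℝ)..x, t^6/(1+t) := by
    apply intervalIntegral.integral_nonneg h0
    intro t ht
    have h1t : (0:ℝ) < 1 + t := by linarith [ht.1]
    exact div_nonneg (pow_nonneg ht.1 6) h1t.le
  rw [hint] at hnn
  norm_num at hnn
  linarith
set_option maxHeartbeats 1000000 in
lemma key1 (a : ℝ) (ha : 0 < a) (hm : a ≤ 0.3142) :
    (1 - 2*a) * Real.log (1 - 2*a) - (2 - 2*a) * Real.log (1 - a)
      < 2*a^2 * Real.log 2 + ((1 - 4*a^2)/2) * Real.log (1 - 4*a^2)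
        - (1 - 2*a^2) * Real.log (1 - 2*a^2) := by
  have hsplit : Real.log (1 - 4*a^2) = Real.log (1 - 2*a) + Real.log (1 + 2*a) := by
    rw [show (1:ℝ) - 4*a^2 = (1 - 2*a) * (1 + 2*a) by ring,
      Real.log_mul (by norm_num; nlinarith) (by nlinarith)]
  rw [hsplit]
  have hb1 : Real.log (1 - 2*a) ≤
      -(2*a + (2*a)^2/2 + (2*a)^3/3 + (2*a)^4/4 + (2*a)^5/5 + (2*a)^6/6) :=
    log_one_sub_le6 (by linarith) (by nlinarith)
  have hb2 : 2*a - (2*a)^2/2 + (2*a)^3/3 - (2*a)^4/4 + (2*a)^5/5 - (2*a)^6/6 ≤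
      Real.log (1 + 2*a) := log_one_add_ge6 (by linarith)
  have hb3 : Real.log (1 - 2*a^2) ≤
      -(2*a^2 + (2*a^2)^2/2 + (2*a^2)^3/3 + (2*a^2)^4/4 + (2*a^2)^5/5 + (2*a^2)^6/6) :=
    log_one_sub_le6 (by positivity) (by nlinarith)
  have hb4' : -(a + a^2/2 + a^3/3 + a^4/4 + a^5/5 + a^6/6) - a^7/(7*(1-a)) ≤
      Real.log (1 - a) := log_one_sub_ge6 ha.le (by linarith)
  have hrem : a^7/(7*(1-a)) ≤ (21/100)*a^7 := by
    rw [div_le_iff₀ (by nlinarith)]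
    nlinarith [pow_nonneg ha.le 7]
  have hb4 : -(a + a^2/2 + a^3/3 + a^4/4 + a^5/5 + a^6/6) - (21/100)*a^7 ≤
      Real.log (1 - a) := by linarith
  have e1 : (1-2*a)^2/2 * Real.log (1 - 2*a) ≤
      (1-2*a)^2/2 * (-(2*a + (2*a)^2/2 + (2*a)^3/3 + (2*a)^4/4 + (2*a)^5/5 + (2*a)^6/6)) :=
    mul_le_mul_of_nonneg_left hb1 (by positivity)
  have e2 : (1-4*a^2)/2 * (2*a - (2*a)^2/2 + (2*a)^3/3 - (2*a)^4/4 + (2*a)^5/5 - (2*a)^6/6) ≤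
      (1-4*a^2)/2 * Real.log (1 + 2*a) :=
    mul_le_mul_of_nonneg_left hb2 (by nlinarith)
  have e3 : (1-2*a^2) * Real.log (1 - 2*a^2) ≤
      (1-2*a^2) * (-(2*a^2 + (2*a^2)^2/2 + (2*a^2)^3/3 + (2*a^2)^4/4 + (2*a^2)^5/5 + (2*a^2)^6/6)) :=
    mul_le_mul_of_nonneg_left hb3 (by nlinarith)
  have e4 : (2-2*a) * (-(a + a^2/2 + a^3/3 + a^4/4 + a^5/5 + a^6/6) - (21/100)*a^7) ≤
      (2-2*a) * Real.log (1 - a) :=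
    mul_le_mul_of_nonneg_left hb4 (by nlinarith)
  have e5 : 2*a^2 * (0.6931471803 : ℝ) ≤ 2*a^2 * Real.log 2 :=
    mul_le_mul_of_nonneg_left Real.log_two_gt_d9.le (by positivity)
  have h5nn : (0:ℝ) ≤ a^5 := by positivity
  have h2m : a^2 ≤ (0.3142:ℝ)^2 := pow_le_pow_left₀ ha.le hm 2
  have h5m : a^5 ≤ (0.3142:ℝ)^5 := pow_le_pow_left₀ ha.le hm 5
  have h7m : a^7 ≤ (0.3142:ℝ)^7 := pow_le_pow_left₀ ha.le hm 7
  have h9m : a^9 ≤ (0.3142:ℝ)^9 := pow_le_pow_left₀ ha.le hm 9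
  have h7 : a^7 ≤ (0.3142:ℝ)^2 * a^5 := by
    calc a^7 = a^2 * a^5 := by ring
    _ ≤ (0.3142:ℝ)^2 * a^5 := mul_le_mul_of_nonneg_right h2m h5nn
  have h10 : a^10 ≤ (0.3142:ℝ)^5 * a^5 := by
    calc a^10 = a^5 * a^5 := by ring
    _ ≤ (0.3142:ℝ)^5 * a^5 := mul_le_mul_of_nonneg_right h5m h5nn
  have h12 : a^12 ≤ (0.3142:ℝ)^7 * a^5 := by
    calc a^12 = a^7 * a^5 := by ring
    _ ≤ (0.3142:ℝ)^7 * a^5 := mul_le_mul_of_nonneg_right h7m h5nn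
  have h14 : a^14 ≤ (0.3142:ℝ)^9 * a^5 := by
    calc a^14 = a^9 * a^5 := by ring
    _ ≤ (0.3142:ℝ)^9 * a^5 := mul_le_mul_of_nonneg_right h9m h5nn
  have hc2 : 0 ≤ (0.3142 - a) * a^2 := mul_nonneg (by linarith) (by positivity)
  have hc3 : 0 ≤ (0.3142 - a) * a^3 := mul_nonneg (by linarith) (by positivity)
  have hc4 : 0 ≤ (0.3142 - a) * a^4 := mul_nonneg (by linarith) (by positivity)
  have hP : (0:ℝ) < 2*a^2 * (0.6931471803 : ℝ)
      + (1-2*a)^2/2 * (2*a + (2*a)^2/2 + (2*a)^3/3 + (2*a)^4/4 + (2*a)^5/5 + (2*a)^6/6)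
      + (1-4*a^2)/2 * (2*a - (2*a)^2/2 + (2*a)^3/3 - (2*a)^4/4 + (2*a)^5/5 - (2*a)^6/6)
      + (1-2*a^2) * (2*a^2 + (2*a^2)^2/2 + (2*a^2)^3/3 + (2*a^2)^4/4 + (2*a^2)^5/5 + (2*a^2)^6/6)
      + (2-2*a) * (-(a + a^2/2 + a^3/3 + a^4/4 + a^5/5 + a^6/6) - (21/100)*a^7) := by
    nlinarith [h7, h10, h12, h14, hc2, hc3, hc4, pow_pos ha 2, pow_nonneg ha.le 6,
      pow_nonneg ha.le 8]
  linarith [e1, e2, e3, e4, e5, hP]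
set_option maxHeartbeats 1000000 in
lemma key2 (a : ℝ) (ha : 0 < a) (hm : a ≤ 0.3142) :
    (1 + 2*a) * Real.log (1 + 2*a) - (2 + 2*a) * Real.log (1 + a)
      < 2*a^2 * Real.log 2 + ((1 - 4*a^2)/2) * Real.log (1 - 4*a^2)
        - (1 - 2*a^2) * Real.log (1 - 2*a^2) := by
  have hsplit : Real.log (1 - 4*a^2) = Real.log (1 - 2*a) + Real.log (1 + 2*a) := by
    rw [show (1:ℝ) - 4*a^2 = (1 - 2*a) * (1 + 2*a) by ring,
      Real.log_mul (by norm_num; nlinarith) (by nlinarith)]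
  rw [hsplit]
  have hb1' : -(2*a + (2*a)^2/2 + (2*a)^3/3 + (2*a)^4/4 + (2*a)^5/5 + (2*a)^6/6)
      - (2*a)^7/(7*(1-2*a)) ≤ Real.log (1 - 2*a) :=
    log_one_sub_ge6 (by linarith) (by nlinarith)
  have hrem : (2*a)^7/(7*(1-2*a)) ≤ 50*a^7 := by
    rw [div_le_iff₀ (by nlinarith)]
    nlinarith [pow_nonneg ha.le 7, pow_nonneg ha.le 8]
  have hb1 : -(2*a + (2*a)^2/2 + (2*a)^3/3 + (2*a)^4/4 + (2*a)^5/5 + (2*a)^6/6)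
      - 50*a^7 ≤ Real.log (1 - 2*a) := by linarith
  have hb2 : Real.log (1 + 2*a) ≤ 2*a - (2*a)^2/2 + (2*a)^3/3 - (2*a)^4/4 + (2*a)^5/5 :=
    log_one_add_le5 (by linarith)
  have hb3 : Real.log (1 - 2*a^2) ≤
      -(2*a^2 + (2*a^2)^2/2 + (2*a^2)^3/3 + (2*a^2)^4/4 + (2*a^2)^5/5 + (2*a^2)^6/6) :=
    log_one_sub_le6 (by positivity) (by nlinarith)
  have hb5 : a - a^2/2 + a^3/3 - a^4/4 + a^5/5 - a^6/6 ≤ Real.log (1 + a) :=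
    log_one_add_ge6 ha.le
  have e1 : (1-4*a^2)/2 * (-(2*a + (2*a)^2/2 + (2*a)^3/3 + (2*a)^4/4 + (2*a)^5/5 + (2*a)^6/6)
      - 50*a^7) ≤ (1-4*a^2)/2 * Real.log (1 - 2*a) :=
    mul_le_mul_of_nonneg_left hb1 (by nlinarith)
  have e2 : (1+2*a)^2/2 * Real.log (1 + 2*a) ≤
      (1+2*a)^2/2 * (2*a - (2*a)^2/2 + (2*a)^3/3 - (2*a)^4/4 + (2*a)^5/5) :=
    mul_le_mul_of_nonneg_left hb2 (by positivity)
  have e3 : (1-2*a^2) * Real.log (1 - 2*a^2) ≤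
      (1-2*a^2) * (-(2*a^2 + (2*a^2)^2/2 + (2*a^2)^3/3 + (2*a^2)^4/4 + (2*a^2)^5/5 + (2*a^2)^6/6)) :=
    mul_le_mul_of_nonneg_left hb3 (by nlinarith)
  have e4 : (2+2*a) * (a - a^2/2 + a^3/3 - a^4/4 + a^5/5 - a^6/6) ≤
      (2+2*a) * Real.log (1 + a) :=
    mul_le_mul_of_nonneg_left hb5 (by linarith)
  have e5 : 2*a^2 * (0.6931471803 : ℝ) ≤ 2*a^2 * Real.log 2 :=
    mul_le_mul_of_nonneg_left Real.log_two_gt_d9.le (by positivity)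
  have h2nn : (0:ℝ) < a^2 := by positivity
  have h2m : a^2 ≤ (0.3142:ℝ)^2 := pow_le_pow_left₀ ha.le hm 2
  have h4m : a^4 ≤ (0.3142:ℝ)^4 := pow_le_pow_left₀ ha.le hm 4
  have h5m : a^5 ≤ (0.3142:ℝ)^5 := pow_le_pow_left₀ ha.le hm 5
  have h8m : a^8 ≤ (0.3142:ℝ)^8 := pow_le_pow_left₀ ha.le hm 8
  have h10m : a^10 ≤ (0.3142:ℝ)^10 := pow_le_pow_left₀ ha.le hm 10
  have h12m : a^12 ≤ (0.3142:ℝ)^12 := pow_le_pow_left₀ ha.le hm 12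
  have h6 : a^6 ≤ (0.3142:ℝ)^4 * a^2 := by
    calc a^6 = a^4 * a^2 := by ring
    _ ≤ (0.3142:ℝ)^4 * a^2 := mul_le_mul_of_nonneg_right h4m h2nn.le
  have h7 : a^7 ≤ (0.3142:ℝ)^5 * a^2 := by
    calc a^7 = a^5 * a^2 := by ring
    _ ≤ (0.3142:ℝ)^5 * a^2 := mul_le_mul_of_nonneg_right h5m h2nn.le
  have h10 : a^10 ≤ (0.3142:ℝ)^8 * a^2 := by
    calc a^10 = a^8 * a^2 := by ring
    _ ≤ (0.3142:ℝ)^8 * a^2 := mul_le_mul_of_nonneg_right h8m h2nn.le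
  have h12 : a^12 ≤ (0.3142:ℝ)^10 * a^2 := by
    calc a^12 = a^10 * a^2 := by ring
    _ ≤ (0.3142:ℝ)^10 * a^2 := mul_le_mul_of_nonneg_right h10m h2nn.le
  have h14 : a^14 ≤ (0.3142:ℝ)^12 * a^2 := by
    calc a^14 = a^12 * a^2 := by ring
    _ ≤ (0.3142:ℝ)^12 * a^2 := mul_le_mul_of_nonneg_right h12m h2nn.le
  have hP : (0:ℝ) < 2*a^2 * (0.6931471803 : ℝ)
      + (1-4*a^2)/2 * (-(2*a + (2*a)^2/2 + (2*a)^3/3 + (2*a)^4/4 + (2*a)^5/5 + (2*a)^6/6) - 50*a^7)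
      - (1+2*a)^2/2 * (2*a - (2*a)^2/2 + (2*a)^3/3 - (2*a)^4/4 + (2*a)^5/5)
      + (1-2*a^2) * (2*a^2 + (2*a^2)^2/2 + (2*a^2)^3/3 + (2*a^2)^4/4 + (2*a^2)^5/5 + (2*a^2)^6/6)
      + (2+2*a) * (a - a^2/2 + a^3/3 - a^4/4 + a^5/5 - a^6/6) := by
    nlinarith [h6, h7, h10, h12, h14, h2nn, pow_nonneg ha.le 3, pow_nonneg ha.le 4,
      pow_nonneg ha.le 5, pow_nonneg ha.le 8, pow_nonneg ha.le 9]
  linarith [e1, e2, e3, e4, e5, hP]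

/-- For odd `n ≥ 5` with `α = sin(π/(2n))`, the two candidate values of `S(ω_A)`
disagree (case `n ≡ 3 (mod 4)` and case `n ≡ 1 (mod 4)`). -/
theorem stmt16 (n : ℕ) (hn : 5 ≤ n) (hodd : Odd n) :
    (n % 4 = 3 →
      2 * Real.sin (π/(2*n))^2 * Real.log 2
        + ((1 - 4 * Real.sin (π/(2*n))^2)/2) * Real.log (1 - 4 * Real.sin (π/(2*n))^2)
        - (1 - 2 * Real.sin (π/(2*n))^2) * Real.log (1 - 2 * Real.sin (π/(2*n))^2)
      ≠ (1 - 2 * Real.sin (π/(2*n))) * Real.log (1 - 2 * Real.sin (π/(2*n)))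
        - (2 - 2 * Real.sin (π/(2*n))) * Real.log (1 - Real.sin (π/(2*n)))) ∧
    (n % 4 = 1 →
      2 * Real.sin (π/(2*n))^2 * Real.log 2
        + ((1 - 4 * Real.sin (π/(2*n))^2)/2) * Real.log (1 - 4 * Real.sin (π/(2*n))^2)
        - (1 - 2 * Real.sin (π/(2*n))^2) * Real.log (1 - 2 * Real.sin (π/(2*n))^2)
      ≠ (1 + 2 * Real.sin (π/(2*n))) * Real.log (1 + 2 * Real.sin (π/(2*n)))
        - (2 + 2 * Real.sin (π/(2*n))) * Real.log (1 + Real.sin (π/(2*n)))) := by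
  have hn5 : (5:ℝ) ≤ (n:ℝ) := by exact_mod_cast hn
  have hx0 : 0 < π/(2*(n:ℝ)) := by positivity
  have hx10 : π/(2*(n:ℝ)) ≤ π/10 := by
    apply div_le_div_of_nonneg_left Real.pi_pos.le (by norm_num)
    linarith
  have ha0 : 0 < Real.sin (π/(2*(n:ℝ))) := by
    apply Real.sin_pos_of_pos_of_lt_pi hx0
    calc π/(2*(n:ℝ)) ≤ π/10 := hx10
    _ < π := by linarith [Real.pi_pos]
  have ham : Real.sin (π/(2*(n:ℝ))) ≤ 0.3142 := by
    have h1 := Real.sin_lt hx0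
    have h2 : π/10 < 0.3142 := by linarith [Real.pi_lt_d6]
    linarith
  set a := Real.sin (π/(2*(n:ℝ))) with hadef
  constructor
  · intro _
    have h := key1 a ha0 ham
    exact ne_of_gt (by linarith)
  · intro _
    have h := key2 a ha0 ham
    exact ne_of_gt (by linarith)
end
end
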